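/- arXiv:2103.14992 — 3 statements merged into one kernel-verified Lean document; each statement's English description precedes it below -/
import Mathlib

section
/- For all sufficiently large c (c ≥ 17 suffices) and all q ≥ 3, every leaf of the HCS decomposition of the ring of cliques R(q,c) is exactly one of the q cliques; that is, the leaf communities of the hierarchical modularity-maximizing decomposition are precisely the cliques of size c. -/
open Finset
open scoped Classical

noncomputable section

namespace HCSPaper

variable {V : Type*} [Fintype V] [DecidableEq V]

/-- The number of edges of a finite simple graph `G`. -/
def edgeCount (G : SimpleGraph V) : ℕ := G.edgeSet.ncard

/-- The degree `d(v)` of a vertex. -/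
def deg (G : SimpleGraph V) (v : V) : ℕ := (G.neighborSet v).ncard

/-- The modularity `Q(P)` of a partition `P` of the vertex set of `G`:
`Q(P) = (1/(2m)) Σ_{u,v} [A_{u,v} − d(u)d(v)/(2m)] δ_P(u,v)`, the sum over ordered pairs. -/
def Qmod (G : SimpleGraph V) (P : Finpartition (Finset.univ : Finset V)) : ℝ :=
  (1 / (2 * (edgeCount G : ℝ))) *
    ∑ u : V, ∑ v : V,
      ((if G.Adj u v then (1 : ℝ) else 0) -
          (deg G u : ℝ) * (deg G v : ℝ) / (2 * (edgeCount G : ℝ))) *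
        (if ∃ t ∈ P.parts, u ∈ t ∧ v ∈ t then (1 : ℝ) else 0)

/-- A hierarchical decomposition of (a subset of) the vertex set: a rooted tree whose
nodes are subsets of the vertices (communities), in which the children of each internal
node form a partition of that node into at least two parts.  `HTree C` is a hierarchical
decomposition rooted at the community `C`. -/
inductive HTree {V : Type*} [DecidableEq V] : Finset V → Type _
  | leaf (C : Finset V) : HTree C
  | node (C : Finset V) (P : Finpartition C) (h2 : 2 ≤ P.parts.card)
      (child : ∀ t ∈ P.parts, HTree t) : HTree C

namespace HTree

variable {V : Type*} [DecidableEq V]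

/-- The depth of a hierarchical decomposition (the maximum distance from the root to a
node). -/
def depth : {C : Finset V} → HTree C → ℕ
  | _, .leaf _ => 0
  | _, .node _ P _ child => 1 + P.parts.attach.sup fun t => (child t.1 t.2).depth

/-- All leaf communities of the decomposition satisfy the predicate `Q`. -/
def ForallLeaf : {C : Finset V} → HTree C → (Finset V → Prop) → Prop
  | _, .leaf C, Q => Q C
  | _, .node _ P _ child, Q => ∀ t (ht : t ∈ P.parts), (child t ht).ForallLeaf Q

/-- All internal communities `C` of the decomposition, together with their partition into
children, satisfy the predicate `Q`. -/
def ForallNode : {C : Finset V} → HTree C →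
    ((C : Finset V) → Finpartition C → Prop) → Prop
  | _, .leaf _, _ => True
  | _, .node C P _ child, Q => Q C P ∧ ∀ t (ht : t ∈ P.parts), (child t ht).ForallNode Q

end HTree

/-- The number of edges of the induced subgraph `G[C]`. -/
def edgeCountOn (G : SimpleGraph V) (C : Finset V) : ℕ :=
  Set.ncard {e : Sym2 V | e ∈ G.edgeSet ∧ ∀ v ∈ e, v ∈ C}

/-- The degree of `u` in the induced subgraph `G[C]`. -/
def degOn (G : SimpleGraph V) (C : Finset V) (u : V) : ℕ :=
  Set.ncard {v : V | v ∈ C ∧ G.Adj u v}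

/-- The modularity of a partition `P` of the community `C`, computed in the induced
subgraph `G[C]`. -/
def QmodOn (G : SimpleGraph V) (C : Finset V) (P : Finpartition C) : ℝ :=
  (1 / (2 * (edgeCountOn G C : ℝ))) *
    ∑ u ∈ C, ∑ v ∈ C,
      ((if G.Adj u v then (1 : ℝ) else 0) -
          (degOn G C u : ℝ) * (degOn G C v : ℝ) / (2 * (edgeCountOn G C : ℝ))) *
        (if ∃ t ∈ P.parts, u ∈ t ∧ v ∈ t then (1 : ℝ) else 0)

/-- `T` is an HCS decomposition of `G`: at every internal node the partition into
children is a modularity-maximizing partition of the induced subgraph (into at least two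
parts), and a node is a leaf exactly when the trivial one-part partition is
modularity-maximizing for it. -/
def IsHCS (G : SimpleGraph V) : {C : Finset V} → HTree C → Prop
  | C, .leaf _ => ∀ P P₁ : Finpartition C, P₁.parts = {C} →
      QmodOn G C P ≤ QmodOn G C P₁
  | C, .node _ P _ child =>
      (∀ P' : Finpartition C, QmodOn G C P' ≤ QmodOn G C P) ∧
      ∀ t (ht : t ∈ P.parts), IsHCS G (child t ht)

/-- The set of leaf communities of a hierarchical decomposition. -/
def HTree.leavesSet {V : Type*} [DecidableEq V] :
    {C : Finset V} → HTree C → Set (Finset V)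
  | _, .leaf C => {C}
  | _, .node _ P _ child => ⋃ (t) (ht : t ∈ P.parts), (child t ht).leavesSet

/-- The ring of cliques `R(q,c)` on vertex set `Fin q × Fin c`: for each `i`, the set
`{i} × Fin c` is a clique (the `i`-th clique), and the canonical vertices `v_i = (i, 0)`
form a cycle, `v_i` being adjacent to `v_{i+1 mod q}`. -/
def ringOfCliques (q c : ℕ) : SimpleGraph (Fin q × Fin c) :=
  SimpleGraph.fromRel fun x y =>
    x.1 = y.1 ∨
      (x.2.val = 0 ∧ y.2.val = 0 ∧
        (y.1.val = (x.1.val + 1) % q ∨ x.1.val = (y.1.val + 1) % q))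

/-- The `i`-th clique of the ring of cliques: the vertices `{i} × Fin c`. -/
def clique (q c : ℕ) (i : Fin q) : Finset (Fin q × Fin c) :=
  Finset.univ.filter fun x => x.1 = i

/-- The union of `len` cyclically consecutive cliques of `R(q,c)` starting at clique
`a`. -/
def cliqueBlock (q c : ℕ) (a : Fin q) (len : ℕ) : Finset (Fin q × Fin c) :=
  (Finset.range len).biUnion fun j =>
    clique q c ⟨(a.val + j) % q, Nat.mod_lt _ a.pos⟩

variable (G : SimpleGraph V)

lemma degOn_eq (G : SimpleGraph V) (C : Finset V) (u : V) :
    degOn G C u = (C.filter (G.Adj u)).card := by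
  have : {v : V | v ∈ C ∧ G.Adj u v} = ↑(C.filter (G.Adj u)) := by
    ext v; simp [Finset.mem_filter]
  rw [degOn, this, Set.ncard_coe_finset]

lemma handshake (G : SimpleGraph V) (C : Finset V) :
    ∑ u ∈ C, degOn G C u = 2 * edgeCountOn G C := by
  classical
  set H : SimpleGraph {x // x ∈ C} := G.comap Subtype.val with hH
  haveI : DecidableRel H.Adj := fun a b => by
    simp only [hH, SimpleGraph.comap_adj]; infer_instance
  have hdeg : ∀ u : {x // x ∈ C}, H.degree u = degOn G C u.1 := by
    intro u
    rw [degOn_eq, SimpleGraph.degree]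
    apply Finset.card_bij (fun (v : {x // x ∈ C}) _ => v.1)
    · intro v hv
      simp only [SimpleGraph.mem_neighborFinset] at hv
      simp only [Finset.mem_filter]
      exact ⟨v.2, hv⟩
    · intro a ha b hb hab; exact Subtype.ext hab
    · intro b hb
      simp only [Finset.mem_filter] at hb
      exact ⟨⟨b, hb.1⟩, by simp [SimpleGraph.mem_neighborFinset, hH, hb.2], rfl⟩
  have hedge : H.edgeFinset.card = edgeCountOn G C := by
    have himg : {e : Sym2 V | e ∈ G.edgeSet ∧ ∀ v ∈ e, v ∈ C} =
        Sym2.map (Subtype.val) '' H.edgeSet := by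
      ext e
      refine e.ind (fun a b => ?_)
      constructor
      · rintro ⟨hadj, hmem⟩
        rw [SimpleGraph.mem_edgeSet] at hadj
        have ha : a ∈ C := hmem a (by simp)
        have hb : b ∈ C := hmem b (by simp)
        refine ⟨s(⟨a, ha⟩, ⟨b, hb⟩), ?_, by simp⟩
        simpa [hH, SimpleGraph.mem_edgeSet] using hadj
      · rintro ⟨e', he', hmap⟩
        refine e'.ind (fun x y hxy hm => ?_) he' hmap
        simp only [Sym2.map_pair_eq] at hm
        rw [Sym2.eq_iff] at hm
        have hadj : G.Adj x.1 y.1 := by simpa [hH, SimpleGraph.mem_edgeSet] using hxy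
        have hmem : ∀ v ∈ s(x.1, y.1), v ∈ C := by
          rintro v hv
          rw [Sym2.mem_iff] at hv
          rcases hv with rfl | rfl
          exacts [x.2, y.2]
        rcases hm with ⟨h1, h2⟩ | ⟨h1, h2⟩
        · rw [← h1, ← h2]
          exact ⟨hadj, hmem⟩
        · rw [← h1, ← h2]
          refine ⟨hadj.symm, ?_⟩
          rintro v hv
          rw [Sym2.mem_iff] at hv
          rcases hv with rfl | rfl
          exacts [y.2, x.2]
    have h1 : edgeCountOn G C = H.edgeSet.ncard := by
      rw [edgeCountOn, himg,
        Set.ncard_image_of_injective _ (Sym2.map.injective Subtype.val_injective)]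
    have h2 : H.edgeSet.ncard = Fintype.card H.edgeSet := by
      rw [← Nat.card_coe_set_eq, Nat.card_eq_fintype_card]
    rw [h1, h2, SimpleGraph.edgeFinset_card]
  calc ∑ u ∈ C, degOn G C u = ∑ u : {x // x ∈ C}, degOn G C u.1 := by
        rw [← Finset.sum_coe_sort C (degOn G C)]
      _ = ∑ u : {x // x ∈ C}, H.degree u := by simp [hdeg]
      _ = 2 * H.edgeFinset.card := H.sum_degrees_eq_twice_card_edges
      _ = 2 * edgeCountOn G C := by rw [hedge]


variable (G : SimpleGraph V)

/-- real adjacency indicator -/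
def adjR (u v : V) : ℝ := if G.Adj u v then 1 else 0

omit [Fintype V] [DecidableEq V] in
lemma adjR_nonneg (u v : V) : 0 ≤ adjR G u v := by
  unfold adjR; split <;> norm_num

omit [Fintype V] [DecidableEq V] in
lemma adjR_comm (u v : V) : adjR G u v = adjR G v u := by
  unfold adjR; rw [SimpleGraph.adj_comm]

def dsum (C t : Finset V) : ℝ := ∑ u ∈ t, (degOn G C u : ℝ)

def esum (t : Finset V) : ℝ := ∑ u ∈ t, ∑ v ∈ t, adjR G u v

def cross (s t : Finset V) : ℝ := ∑ u ∈ s, ∑ v ∈ t, adjR G u v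

lemma sum_adjR (C : Finset V) (u : V) : ∑ v ∈ C, adjR G u v = (degOn G C u : ℝ) := by
  rw [degOn_eq]
  unfold adjR
  rw [Finset.sum_boole]

lemma dsum_self (C : Finset V) : dsum G C C = 2 * (edgeCountOn G C : ℝ) := by
  unfold dsum
  rw [← Nat.cast_sum, handshake]
  push_cast
  ring

lemma esum_self (C : Finset V) : esum G C = 2 * (edgeCountOn G C : ℝ) := by
  unfold esum
  trans (∑ u ∈ C, (degOn G C u : ℝ))
  · exact Finset.sum_congr rfl fun u _ => sum_adjR G C u
  · exact dsum_self G C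

omit [Fintype V] [DecidableEq V] in
lemma dsum_nonneg (C t : Finset V) : 0 ≤ dsum G C t :=
  Finset.sum_nonneg fun u _ => by positivity

omit [Fintype V] [DecidableEq V] in
lemma cross_nonneg (s t : Finset V) : 0 ≤ cross G s t :=
  Finset.sum_nonneg fun u _ => Finset.sum_nonneg fun v _ => adjR_nonneg G u v

omit [Fintype V] [DecidableEq V] in
lemma cross_comm (s t : Finset V) : cross G s t = cross G t s := by
  unfold cross
  rw [Finset.sum_comm]
  exact Finset.sum_congr rfl fun u _ => Finset.sum_congr rfl fun v _ => adjR_comm G v u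

omit [Fintype V] in
lemma cross_mono_right (s : Finset V) {t t' : Finset V} (h : t ⊆ t') :
    cross G s t ≤ cross G s t' :=
  Finset.sum_le_sum fun u _ =>
    Finset.sum_le_sum_of_subset_of_nonneg h fun v _ _ => adjR_nonneg G u v

omit [Fintype V] in
lemma esum_union {s t : Finset V} (h : Disjoint s t) :
    esum G (s ∪ t) = esum G s + esum G t + 2 * cross G s t := by
  unfold esum cross
  rw [Finset.sum_union h]
  have h1 : ∀ w : V, ∑ v ∈ s ∪ t, adjR G w v = ∑ v ∈ s, adjR G w v + ∑ v ∈ t, adjR G w v :=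
    fun w => Finset.sum_union h
  simp_rw [h1, Finset.sum_add_distrib]
  have h2 : ∑ u ∈ t, ∑ v ∈ s, adjR G u v = ∑ u ∈ s, ∑ v ∈ t, adjR G u v := by
    rw [Finset.sum_comm]
    exact Finset.sum_congr rfl fun u _ => Finset.sum_congr rfl fun v _ => adjR_comm G v u
  rw [h2]; ring

omit [Fintype V] in
lemma dsum_union (C : Finset V) {s t : Finset V} (h : Disjoint s t) :
    dsum G C (s ∪ t) = dsum G C s + dsum G C t :=
  Finset.sum_union h

omit [Fintype V] in
lemma sum_parts_inter (C : Finset V) (P : Finpartition C) (K : Finset V)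
    (hK : K ⊆ C) (g : V → ℝ) :
    ∑ t ∈ P.parts, ∑ u ∈ t ∩ K, g u = ∑ u ∈ K, g u := by
  have hbi : K = P.parts.biUnion (fun t => t ∩ K) := by
    ext x
    simp only [Finset.mem_biUnion, Finset.mem_inter]
    constructor
    · intro hx
      obtain ⟨t, ht, hxt⟩ := P.exists_mem (hK hx)
      exact ⟨t, ht, hxt, hx⟩
    · rintro ⟨t, _, _, hx⟩; exact hx
  rw [show ∑ u ∈ K, g u = ∑ u ∈ P.parts.biUnion (fun t => t ∩ K), g u by rw [← hbi]]
  rw [Finset.sum_biUnion]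
  intro a ha b hb hab
  exact Finset.disjoint_of_subset_left (Finset.inter_subset_left)
    (Finset.disjoint_of_subset_right (Finset.inter_subset_left)
      (P.disjoint ha hb hab))

lemma delta_eq (C : Finset V) (P : Finpartition C) (u v : V) :
    (if ∃ t ∈ P.parts, u ∈ t ∧ v ∈ t then (1 : ℝ) else 0) =
      ∑ t ∈ P.parts, (if u ∈ t then (1 : ℝ) else 0) * (if v ∈ t then (1 : ℝ) else 0) := by
  by_cases h : ∃ t ∈ P.parts, u ∈ t ∧ v ∈ t
  · obtain ⟨t₀, ht₀, hu, hv⟩ := h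
    rw [if_pos ⟨t₀, ht₀, hu, hv⟩]
    rw [Finset.sum_eq_single t₀]
    · simp [hu, hv]
    · intro t ht hne
      by_cases hu' : u ∈ t
      · exact absurd (P.eq_of_mem_parts ht ht₀ hu' hu) hne
      · simp [hu']
    · intro h; exact absurd ht₀ h
  · rw [if_neg h]
    push_neg at h
    symm
    apply Finset.sum_eq_zero
    intro t ht
    by_cases hu : u ∈ t
    · simp [(h t ht hu)]
    · simp [hu]

lemma Qsplit (C : Finset V) (hm : edgeCountOn G C ≠ 0) (P : Finpartition C) :
    QmodOn G C P = ∑ t ∈ P.parts,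
      (esum G t / (2 * (edgeCountOn G C : ℝ)) -
        (dsum G C t / (2 * (edgeCountOn G C : ℝ))) ^ 2) := by
  set m : ℝ := (edgeCountOn G C : ℝ) with hmdef
  have hm' : (m : ℝ) ≠ 0 := Nat.cast_ne_zero.mpr hm
  set w : V → V → ℝ := fun u v => adjR G u v - (degOn G C u : ℝ) * (degOn G C v : ℝ) / (2 * m)
    with hw
  have key : ∀ t ∈ P.parts,
      ∑ u ∈ C, ∑ v ∈ C, w u v * ((if u ∈ t then (1:ℝ) else 0) * (if v ∈ t then (1:ℝ) else 0))
        = esum G t - dsum G C t * dsum G C t / (2 * m) := by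
    intro t ht
    have htC : t ⊆ C := P.le ht
    have step : ∑ u ∈ C, ∑ v ∈ C,
        w u v * ((if u ∈ t then (1:ℝ) else 0) * (if v ∈ t then (1:ℝ) else 0))
        = ∑ u ∈ t, ∑ v ∈ t, w u v := by
      calc ∑ u ∈ C, ∑ v ∈ C,
            w u v * ((if u ∈ t then (1:ℝ) else 0) * (if v ∈ t then (1:ℝ) else 0))
          = ∑ u ∈ C, (if u ∈ t then (∑ v ∈ C, if v ∈ t then w u v else 0) else 0) := by
            refine Finset.sum_congr rfl fun u _ => ?_
            by_cases hu : u ∈ t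
            · simp only [hu, if_true, one_mul]
              refine Finset.sum_congr rfl fun v _ => ?_
              by_cases hv : v ∈ t <;> simp [hv]
            · simp [hu]
        _ = ∑ u ∈ t, ∑ v ∈ t, w u v := by
            rw [Finset.sum_ite_mem, Finset.inter_eq_right.mpr htC]
            refine Finset.sum_congr rfl fun u _ => ?_
            rw [Finset.sum_ite_mem, Finset.inter_eq_right.mpr htC]
    rw [step]
    have : ∑ u ∈ t, ∑ v ∈ t, w u v
        = ∑ u ∈ t, ∑ v ∈ t, adjR G u v
          - ∑ u ∈ t, ∑ v ∈ t, (degOn G C u : ℝ) * (degOn G C v : ℝ) / (2 * m) := by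
      rw [← Finset.sum_sub_distrib]
      exact Finset.sum_congr rfl fun u _ => by rw [← Finset.sum_sub_distrib]
    rw [this]
    congr 1
    calc ∑ u ∈ t, ∑ v ∈ t, (degOn G C u : ℝ) * (degOn G C v : ℝ) / (2 * m)
        = ∑ u ∈ t, ((degOn G C u : ℝ) * dsum G C t) / (2 * m) :=
          Finset.sum_congr rfl fun u _ => by rw [← Finset.sum_div, ← Finset.mul_sum]; rfl
      _ = dsum G C t * dsum G C t / (2 * m) := by
          rw [← Finset.sum_div, ← Finset.sum_mul]; rfl
  have main : ∑ u ∈ C, ∑ v ∈ C, w u v * (if ∃ t ∈ P.parts, u ∈ t ∧ v ∈ t then (1:ℝ) else 0)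
      = ∑ t ∈ P.parts, (esum G t - dsum G C t * dsum G C t / (2 * m)) := by
    simp_rw [delta_eq, Finset.mul_sum]
    calc ∑ u ∈ C, ∑ v ∈ C, ∑ t ∈ P.parts,
          w u v * ((if u ∈ t then (1:ℝ) else 0) * (if v ∈ t then (1:ℝ) else 0))
        = ∑ u ∈ C, ∑ t ∈ P.parts, ∑ v ∈ C,
          w u v * ((if u ∈ t then (1:ℝ) else 0) * (if v ∈ t then (1:ℝ) else 0)) :=
          Finset.sum_congr rfl fun u _ => Finset.sum_comm
      _ = ∑ t ∈ P.parts, ∑ u ∈ C, ∑ v ∈ C,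
          w u v * ((if u ∈ t then (1:ℝ) else 0) * (if v ∈ t then (1:ℝ) else 0)) :=
          Finset.sum_comm
      _ = ∑ t ∈ P.parts, (esum G t - dsum G C t * dsum G C t / (2 * m)) :=
          Finset.sum_congr rfl key
  rw [QmodOn]
  have : (∑ u ∈ C, ∑ v ∈ C,
      ((if G.Adj u v then (1 : ℝ) else 0) -
          (degOn G C u : ℝ) * (degOn G C v : ℝ) / (2 * m)) *
        (if ∃ t ∈ P.parts, u ∈ t ∧ v ∈ t then (1 : ℝ) else 0))
      = ∑ t ∈ P.parts, (esum G t - dsum G C t * dsum G C t / (2 * m)) := main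
  rw [this, Finset.mul_sum]
  refine Finset.sum_congr rfl fun t _ => ?_
  field_simp
  ring

lemma Qtrivial (C : Finset V) (hm : edgeCountOn G C ≠ 0) (P : Finpartition C)
    (h : P.parts = {C}) : QmodOn G C P = 0 := by
  rw [Qsplit G C hm P, h, Finset.sum_singleton, esum_self, dsum_self]
  have hm' : (edgeCountOn G C : ℝ) ≠ 0 := Nat.cast_ne_zero.mpr hm
  field_simp
  norm_num


section Ring

variable {q c : ℕ}

lemma ring_adj (x y : Fin q × Fin c) :
    (ringOfCliques q c).Adj x y ↔ x ≠ y ∧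
      (x.1 = y.1 ∨ (x.2.val = 0 ∧ y.2.val = 0 ∧
        (y.1.val = (x.1.val + 1) % q ∨ x.1.val = (y.1.val + 1) % q))) := by
  rw [ringOfCliques, SimpleGraph.fromRel_adj]
  constructor
  · rintro ⟨hne, h | h⟩
    · exact ⟨hne, by tauto⟩
    · rcases h with h | ⟨h1, h2, h3⟩
      · exact ⟨hne, Or.inl h.symm⟩
      · exact ⟨hne, Or.inr ⟨h2, h1, by tauto⟩⟩
  · rintro ⟨hne, h⟩
    exact ⟨hne, Or.inl h⟩

lemma mem_clique {i : Fin q} {x : Fin q × Fin c} : x ∈ clique q c i ↔ x.1 = i := by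
  simp [clique]

lemma clique_eq_prod (i : Fin q) : clique q c i = {i} ×ˢ (Finset.univ : Finset (Fin c)) := by
  ext x
  simp only [clique, Finset.mem_filter, Finset.mem_univ, true_and, Finset.mem_product,
    Finset.mem_singleton, and_true]

lemma card_clique (i : Fin q) : (clique q c i).card = c := by
  rw [clique_eq_prod, Finset.card_product]
  simp

lemma adj_of_same_fst {x y : Fin q × Fin c} (hne : x ≠ y) (h : x.1 = y.1) :
    (ringOfCliques q c).Adj x y := (ring_adj x y).mpr ⟨hne, Or.inl h⟩

lemma esum_sub_clique {i : Fin q} {S : Finset (Fin q × Fin c)}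
    (hS : ∀ x ∈ S, x.1 = i) :
    esum (ringOfCliques q c) S = (S.card : ℝ) * ((S.card : ℝ) - 1) := by
  unfold esum
  have key : ∀ u ∈ S, ∑ v ∈ S, adjR (ringOfCliques q c) u v = (S.card : ℝ) - 1 := by
    intro u hu
    have hterm : ∀ v ∈ S, adjR (ringOfCliques q c) u v = if v = u then 0 else 1 := by
      intro v hv
      unfold adjR
      by_cases h : v = u
      · subst h; simp [SimpleGraph.irrefl]
      · rw [if_neg h, if_pos]
        exact adj_of_same_fst (Ne.symm h) (by rw [hS u hu, hS v hv])
    rw [Finset.sum_congr rfl hterm, ← Finset.add_sum_erase _ _ hu, if_pos rfl, zero_add]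
    rw [Finset.sum_congr rfl (fun v hv => if_neg (Finset.ne_of_mem_erase hv))]
    rw [Finset.sum_const, nsmul_eq_mul, mul_one, Finset.card_erase_of_mem hu]
    have : 1 ≤ S.card := Finset.card_pos.mpr ⟨u, hu⟩
    push_cast [Nat.cast_sub this]
    ring
  rw [Finset.sum_congr rfl key, Finset.sum_const, nsmul_eq_mul]

/-- `C` is a union of whole cliques. -/
def IsUC (C : Finset (Fin q × Fin c)) : Prop := ∀ x ∈ C, clique q c x.1 ⊆ C

lemma degOn_lower {C : Finset (Fin q × Fin c)} (hUC : IsUC C)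
    {u : Fin q × Fin c} (hu : u ∈ C) :
    c - 1 ≤ degOn (ringOfCliques q c) C u := by
  rw [degOn_eq]
  have hsub : (clique q c u.1).erase u ⊆ C.filter ((ringOfCliques q c).Adj u) := by
    intro v hv
    have hv1 : v.1 = u.1 := mem_clique.mp (Finset.mem_of_mem_erase hv)
    have hvne : v ≠ u := Finset.ne_of_mem_erase hv
    refine Finset.mem_filter.mpr ⟨hUC u hu (mem_clique.mpr hv1), ?_⟩
    exact adj_of_same_fst (Ne.symm hvne) hv1.symm
  calc c - 1 = ((clique q c u.1).erase u).card := by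
        rw [Finset.card_erase_of_mem (mem_clique.mpr rfl), card_clique]
    _ ≤ _ := Finset.card_le_card hsub

/-- the two potential cycle-neighbours of clique `i` -/
def succV (i : Fin q) (hc : 0 < c) : Fin q × Fin c :=
  (⟨(i.val + 1) % q, Nat.mod_lt _ i.pos⟩, ⟨0, hc⟩)

def predV (i : Fin q) (hc : 0 < c) : Fin q × Fin c :=
  (⟨(i.val + (q - 1)) % q, Nat.mod_lt _ i.pos⟩, ⟨0, hc⟩)

lemma adj_cases {u v : Fin q × Fin c} (h : (ringOfCliques q c).Adj u v)
    (hne1 : v.1 ≠ u.1) :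
    u = (u.1, ⟨0, u.2.pos⟩) ∧ (v = succV u.1 u.2.pos ∨ v = predV u.1 u.2.pos) := by
  rcases (ring_adj u v).mp h with ⟨hne, hcase⟩
  rcases hcase with h1 | ⟨h1, h2, h3⟩
  · exact absurd h1.symm hne1
  constructor
  · ext
    · rfl
    · simpa using h1
  rcases h3 with h3 | h3
  · left
    unfold succV
    ext
    · simpa using h3
    · simpa using h2
  · right
    unfold predV
    have hq1 : 1 ≤ q := u.1.pos
    have : (u.1.val + (q - 1)) % q = v.1.val := by
      rw [h3, Nat.mod_add_mod, show v.1.val + 1 + (q - 1) = v.1.val + q by omega,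
        Nat.add_mod_right, Nat.mod_eq_of_lt v.1.isLt]
    ext
    · simpa using this.symm
    · simpa using h2

lemma degOn_upper (C : Finset (Fin q × Fin c)) (u : Fin q × Fin c) :
    degOn (ringOfCliques q c) C u ≤ c + 1 := by
  rw [degOn_eq]
  have hsub : C.filter ((ringOfCliques q c).Adj u) ⊆
      insert (succV u.1 u.2.pos) (insert (predV u.1 u.2.pos) ((clique q c u.1).erase u)) := by
    intro v hv
    obtain ⟨hvC, hadj⟩ := Finset.mem_filter.mp hv
    by_cases h1 : v.1 = u.1
    · refine Finset.mem_insert.mpr (Or.inr (Finset.mem_insert.mpr (Or.inr ?_)))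
      exact Finset.mem_erase.mpr ⟨hadj.ne', mem_clique.mpr h1⟩
    · obtain ⟨_, hcase⟩ := adj_cases hadj h1
      rcases hcase with h | h
      · exact Finset.mem_insert.mpr (Or.inl h)
      · exact Finset.mem_insert.mpr (Or.inr (Finset.mem_insert.mpr (Or.inl h)))
  have hc1 : 0 < c := u.2.pos
  calc (C.filter ((ringOfCliques q c).Adj u)).card
      ≤ _ := Finset.card_le_card hsub
    _ ≤ 1 + (1 + ((clique q c u.1).erase u).card) :=
        le_trans (Finset.card_insert_le _ _) (by
          have := Finset.card_insert_le (predV u.1 u.2.pos) ((clique q c u.1).erase u)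
          omega)
    _ ≤ c + 1 := by
        rw [Finset.card_erase_of_mem (mem_clique.mpr rfl), card_clique]
        omega

lemma dsum_upper (C t : Finset (Fin q × Fin c)) :
    dsum (ringOfCliques q c) C t ≤ (t.card : ℝ) * ((c : ℝ) + 1) := by
  unfold dsum
  calc ∑ u ∈ t, (degOn (ringOfCliques q c) C u : ℝ) ≤ ∑ u ∈ t, ((c : ℝ) + 1) :=
        Finset.sum_le_sum fun u _ => by exact_mod_cast degOn_upper C u
    _ = (t.card : ℝ) * ((c : ℝ) + 1) := by rw [Finset.sum_const, nsmul_eq_mul]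

lemma cross_le_two {i : Fin q} (hc : 0 < c) {S T : Finset (Fin q × Fin c)}
    (hS : ∀ x ∈ S, x.1 = i) (hT : ∀ v ∈ T, v.1 ≠ i) :
    cross (ringOfCliques q c) S T ≤ 2 := by
  set vi : Fin q × Fin c := (i, ⟨0, hc⟩) with hvi
  have hpt : ∀ u ∈ S, ∀ v ∈ T, adjR (ringOfCliques q c) u v ≤
      (if u = vi then (1:ℝ) else 0) *
        ((if v = succV i hc then (1:ℝ) else 0) + (if v = predV i hc then (1:ℝ) else 0)) := by
    intro u hu v hv
    unfold adjR
    by_cases h : (ringOfCliques q c).Adj u v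
    · rw [if_pos h]
      have hui : u.1 = i := hS u hu
      have h1 : v.1 ≠ u.1 := by rw [hui]; exact hT v hv
      obtain ⟨hu0, hcase⟩ := adj_cases h h1
      have hu2 : u.2 = (⟨0, hc⟩ : Fin c) := by
        have : u.2.val = 0 := congrArg (fun z => z.2.val) hu0
        exact Fin.ext this
      have huvi : u = vi := by
        rw [hvi]; exact Prod.ext hui hu2
      rw [if_pos huvi, one_mul]
      have hsp : succV u.1 u.2.pos = succV i hc := by rw [hui]
      have hpp : predV u.1 u.2.pos = predV i hc := by rw [hui]
      rcases hcase with hcv | hcv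
      · have he : (if v = succV i hc then (1:ℝ) else 0) = 1 := if_pos (by rw [← hsp]; exact hcv)
        rw [he]
        have : (0:ℝ) ≤ (if v = predV i hc then (1:ℝ) else 0) := by positivity
        linarith
      · have he : (if v = predV i hc then (1:ℝ) else 0) = 1 := if_pos (by rw [← hpp]; exact hcv)
        rw [he]
        have : (0:ℝ) ≤ (if v = succV i hc then (1:ℝ) else 0) := by positivity
        linarith
    · rw [if_neg h]; positivity
  have step1 : cross (ringOfCliques q c) S T ≤
      (∑ u ∈ S, if u = vi then (1:ℝ) else 0) *
        (∑ v ∈ T, ((if v = succV i hc then (1:ℝ) else 0) + (if v = predV i hc then (1:ℝ) else 0))) := by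
    rw [Finset.sum_mul_sum]
    exact Finset.sum_le_sum fun u hu => Finset.sum_le_sum fun v hv => hpt u hu v hv
  have hA : (∑ u ∈ S, if u = vi then (1:ℝ) else 0) ≤ 1 := by
    rw [Finset.sum_ite_eq' S vi (fun _ => (1:ℝ))]
    split <;> norm_num
  have hA0 : (0:ℝ) ≤ ∑ u ∈ S, if u = vi then (1:ℝ) else 0 := by positivity
  have hB : (∑ v ∈ T, ((if v = succV i hc then (1:ℝ) else 0) + (if v = predV i hc then (1:ℝ) else 0))) ≤ 2 := by
    rw [Finset.sum_add_distrib]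
    have b1 : (∑ v ∈ T, if v = succV i hc then (1:ℝ) else 0) ≤ 1 := by
      rw [Finset.sum_ite_eq' T _ (fun _ => (1:ℝ))]; split <;> norm_num
    have b2 : (∑ v ∈ T, if v = predV i hc then (1:ℝ) else 0) ≤ 1 := by
      rw [Finset.sum_ite_eq' T _ (fun _ => (1:ℝ))]; split <;> norm_num
    linarith
  have hB0 : (0:ℝ) ≤ ∑ v ∈ T, ((if v = succV i hc then (1:ℝ) else 0) + (if v = predV i hc then (1:ℝ) else 0)) := by positivity
  calc cross (ringOfCliques q c) S T ≤ _ := step1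
    _ ≤ 1 * 2 := by
      apply mul_le_mul hA hB hB0
      norm_num
    _ = 2 := by norm_num

lemma cliques_disjoint {i j : Fin q} (hij : i ≠ j) :
    Disjoint (clique q c i) (clique q c j) := by
  rw [Finset.disjoint_left]
  intro x hx hx'
  exact hij ((mem_clique.mp hx) ▸ (mem_clique.mp hx'))

lemma edgeCountOn_pos {C : Finset (Fin q × Fin c)} (hUC : IsUC C)
    (hne : C.Nonempty) (hc : 2 ≤ c) : 0 < edgeCountOn (ringOfCliques q c) C := by
  obtain ⟨u, hu⟩ := hne
  have h1 : c - 1 ≤ degOn (ringOfCliques q c) C u := degOn_lower hUC hu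
  have h2 : degOn (ringOfCliques q c) C u ≤ ∑ v ∈ C, degOn (ringOfCliques q c) C v :=
    Finset.single_le_sum (fun v _ => Nat.zero_le _) hu
  have h3 := handshake (ringOfCliques q c) C
  omega

lemma edgeCountOn_lower {C : Finset (Fin q × Fin c)} (hUC : IsUC C)
    {i j : Fin q} (hij : i ≠ j) (hi : clique q c i ⊆ C) (hj : clique q c j ⊆ C) :
    c * (c - 1) ≤ edgeCountOn (ringOfCliques q c) C := by
  have hdisj := cliques_disjoint (c := c) hij
  have hsub : clique q c i ∪ clique q c j ⊆ C := Finset.union_subset hi hj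
  have hcard : (clique q c i ∪ clique q c j).card = 2 * c := by
    rw [Finset.card_union_of_disjoint hdisj, card_clique, card_clique]; omega
  have h1 : (clique q c i ∪ clique q c j).card * (c - 1) ≤
      ∑ u ∈ clique q c i ∪ clique q c j, degOn (ringOfCliques q c) C u := by
    have := Finset.card_nsmul_le_sum (clique q c i ∪ clique q c j)
      (degOn (ringOfCliques q c) C) (c - 1) (fun x hx => degOn_lower hUC (hsub hx))
    simpa [smul_eq_mul] using this
  have h2 : ∑ u ∈ clique q c i ∪ clique q c j, degOn (ringOfCliques q c) C u ≤
      ∑ u ∈ C, degOn (ringOfCliques q c) C u :=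
    Finset.sum_le_sum_of_subset_of_nonneg hsub (fun _ _ _ => Nat.zero_le _)
  have h3 := handshake (ringOfCliques q c) C
  rw [hcard, Nat.mul_assoc] at h1
  omega

lemma sum_parts {C : Finset (Fin q × Fin c)} (P : Finpartition C) (g : Fin q × Fin c → ℝ) :
    ∑ t ∈ P.parts, ∑ u ∈ t, g u = ∑ u ∈ C, g u := by
  rw [← sum_parts_inter C P C (le_refl _) g]
  exact Finset.sum_congr rfl fun t ht => by rw [Finset.inter_eq_left.mpr (P.le ht)]

lemma degOn_clique_exact {i : Fin q} {u : Fin q × Fin c} (hu : u ∈ clique q c i) :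
    degOn (ringOfCliques q c) (clique q c i) u = c - 1 := by
  rw [degOn_eq]
  have : (clique q c i).filter ((ringOfCliques q c).Adj u) = (clique q c i).erase u := by
    ext v
    simp only [Finset.mem_filter, Finset.mem_erase]
    constructor
    · rintro ⟨hv, hadj⟩; exact ⟨hadj.ne', hv⟩
    · rintro ⟨hvu, hv⟩
      exact ⟨hv, adj_of_same_fst (fun h => hvu h.symm)
        (by rw [mem_clique.mp hu, mem_clique.mp hv])⟩
  rw [this, Finset.card_erase_of_mem hu, card_clique]

lemma Q_neg_of_clique {i : Fin q} (hc : 2 ≤ c) (P : Finpartition (clique q c i))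
    (h2 : 2 ≤ P.parts.card) :
    QmodOn (ringOfCliques q c) (clique q c i) P < 0 := by
  have hcc : (clique q c i).card = c := card_clique i
  have hUC : IsUC (clique q c i) := by
    intro x hx
    rw [mem_clique.mp hx]
  have hne : (clique q c i).Nonempty := by rw [← Finset.card_pos, hcc]; omega
  have hm0 : edgeCountOn (ringOfCliques q c) (clique q c i) ≠ 0 :=
    (edgeCountOn_pos hUC hne hc).ne'
  have hcR : (1:ℝ) ≤ (c:ℝ) := by exact_mod_cast Nat.one_le_of_lt hc
  have h2m : 2 * (edgeCountOn (ringOfCliques q c) (clique q c i) : ℝ)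
      = (c:ℝ) * ((c:ℝ) - 1) := by
    have hhs := handshake (ringOfCliques q c) (clique q c i)
    have hsum : ∑ u ∈ clique q c i, degOn (ringOfCliques q c) (clique q c i) u
        = c * (c - 1) := by
      rw [Finset.sum_congr rfl (fun u hu => degOn_clique_exact hu), Finset.sum_const,
        smul_eq_mul, hcc]
    rw [hsum] at hhs
    have : ((c * (c-1) : ℕ) : ℝ) = (c:ℝ) * ((c:ℝ) - 1) := by
      push_cast [Nat.cast_sub (by omega : 1 ≤ c)]
      ring
    rw [hhs] at this
    exact_mod_cast this
  rw [Qsplit _ _ hm0]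
  have key : ∀ t ∈ P.parts,
      esum (ringOfCliques q c) t / (2 * (edgeCountOn (ringOfCliques q c) (clique q c i) : ℝ))
        - (dsum (ringOfCliques q c) (clique q c i) t /
            (2 * (edgeCountOn (ringOfCliques q c) (clique q c i) : ℝ))) ^ 2
      = (t.card : ℝ) * ((t.card : ℝ) - (c:ℝ)) / ((c:ℝ)^2 * ((c:ℝ) - 1)) := by
    intro t ht
    have htC : t ⊆ clique q c i := P.le ht
    have he : esum (ringOfCliques q c) t = (t.card : ℝ) * ((t.card : ℝ) - 1) :=
      esum_sub_clique (fun x hx => mem_clique.mp (htC hx))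
    have hd : dsum (ringOfCliques q c) (clique q c i) t = (t.card : ℝ) * ((c:ℝ) - 1) := by
      unfold dsum
      have hcast : ∀ u ∈ t, (degOn (ringOfCliques q c) (clique q c i) u : ℝ) = (c:ℝ) - 1 := by
        intro u hu
        rw [degOn_clique_exact (htC hu), Nat.cast_sub (by omega : 1 ≤ c), Nat.cast_one]
      rw [Finset.sum_congr rfl hcast, Finset.sum_const, nsmul_eq_mul]
    rw [he, hd, h2m]
    have hc0 : (c:ℝ) ≠ 0 := by linarith
    have hc1 : (c:ℝ) - 1 ≠ 0 := by
      have : (2:ℝ) ≤ (c:ℝ) := by exact_mod_cast hc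
      linarith
    field_simp
    ring
  rw [Finset.sum_congr rfl key]
  have hbound : ∀ t ∈ P.parts,
      (t.card : ℝ) * ((t.card : ℝ) - (c:ℝ)) / ((c:ℝ)^2 * ((c:ℝ) - 1)) ≤ 0 := by
    intro t ht
    have h1 : (0:ℝ) ≤ (t.card : ℝ) := by positivity
    have h2' : (t.card : ℝ) ≤ (c:ℝ) := by
      have := Finset.card_le_card (P.le ht)
      rw [hcc] at this
      exact_mod_cast this
    apply div_nonpos_of_nonpos_of_nonneg
    · nlinarith
    · have : (2:ℝ) ≤ (c:ℝ) := by exact_mod_cast hc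
      nlinarith
  obtain ⟨t₁, ht₁, t₂, ht₂, hne12⟩ := Finset.one_lt_card.mp h2
  have hsmall : t₁.card < c := by
    have hdisj := P.disjoint ht₁ ht₂ hne12
    have hcu : t₁.card + t₂.card = (t₁ ∪ t₂).card :=
      (Finset.card_union_of_disjoint hdisj).symm
    have hcle : (t₁ ∪ t₂).card ≤ c :=
      le_trans (Finset.card_le_card (Finset.union_subset (P.le ht₁) (P.le ht₂))) hcc.le
    have ht₂pos : 0 < t₂.card := Finset.card_pos.mpr (P.nonempty_of_mem_parts ht₂)
    omega
  have hstrict : (t₁.card : ℝ) * ((t₁.card : ℝ) - (c:ℝ)) / ((c:ℝ)^2 * ((c:ℝ) - 1)) < 0 := by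
    have hp : (0:ℝ) < (t₁.card : ℝ) := by
      exact_mod_cast Finset.card_pos.mpr (P.nonempty_of_mem_parts ht₁)
    have hlt : (t₁.card : ℝ) < (c:ℝ) := by exact_mod_cast hsmall
    have hcR2 : (2:ℝ) ≤ (c:ℝ) := by exact_mod_cast hc
    apply div_neg_of_neg_of_pos
    · nlinarith
    · nlinarith
  calc ∑ t ∈ P.parts, (t.card : ℝ) * ((t.card : ℝ) - (c:ℝ)) / ((c:ℝ)^2 * ((c:ℝ) - 1))
      < ∑ t ∈ P.parts, (0:ℝ) := by
        apply Finset.sum_lt_sum hbound ⟨t₁, ht₁, hstrict⟩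
    _ = 0 := Finset.sum_const_zero

lemma clique_nonempty (hc : 0 < c) (k : Fin q) : (clique q c k).Nonempty := by
  rw [← Finset.card_pos, card_clique]; omega

/-- The partition of a union of cliques into its cliques. -/
def cliquePartition (C : Finset (Fin q × Fin c)) (hUC : IsUC C) (hc : 0 < c) :
    Finpartition C where
  parts := (C.image Prod.fst).image (clique q c)
  supIndep := by
    rw [Finset.supIndep_iff_pairwiseDisjoint]
    intro a ha b hb hab
    obtain ⟨k, _, rfl⟩ := Finset.mem_image.mp (Finset.mem_coe.mp ha)
    obtain ⟨l, _, rfl⟩ := Finset.mem_image.mp (Finset.mem_coe.mp hb)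
    exact cliques_disjoint (fun h => hab (by rw [h]))
  sup_parts := by
    apply le_antisymm
    · apply Finset.sup_le
      intro t ht
      obtain ⟨k, hk, rfl⟩ := Finset.mem_image.mp ht
      obtain ⟨x, hx, rfl⟩ := Finset.mem_image.mp hk
      exact hUC x hx
    · intro x hx
      rw [Finset.mem_sup]
      exact ⟨clique q c x.1,
        Finset.mem_image.mpr ⟨x.1, Finset.mem_image.mpr ⟨x, hx, rfl⟩, rfl⟩,
        mem_clique.mpr rfl⟩
  bot_notMem := by
    intro h
    obtain ⟨k, _, hk⟩ := Finset.mem_image.mp h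
    obtain ⟨x, hx⟩ := clique_nonempty hc k
    rw [hk] at hx
    exact absurd hx (Finset.notMem_empty x)

lemma exists_Q_pos {C : Finset (Fin q × Fin c)} (hUC : IsUC C) (hc : 4 ≤ c)
    {i j : Fin q} (hij : i ≠ j) (hi : clique q c i ⊆ C) (hj : clique q c j ⊆ C) :
    ∃ P : Finpartition C, 0 < QmodOn (ringOfCliques q c) C P := by
  classical
  have hcpos : 0 < c := by omega
  refine ⟨cliquePartition C hUC hcpos, ?_⟩
  set G := ringOfCliques q c with hG
  set I := C.image Prod.fst with hI
  obtain ⟨xi, hxi⟩ := clique_nonempty hcpos i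
  obtain ⟨xj, hxj⟩ := clique_nonempty hcpos j
  have hiI : i ∈ I := Finset.mem_image.mpr ⟨xi, hi hxi, mem_clique.mp hxi⟩
  have hjI : j ∈ I := Finset.mem_image.mpr ⟨xj, hj hxj, mem_clique.mp hxj⟩
  have hL : 2 ≤ I.card := Finset.one_lt_card.mpr ⟨i, hiI, j, hjI, hij⟩
  have hneC : C.Nonempty := ⟨xi, hi hxi⟩
  have hm0 : edgeCountOn G C ≠ 0 := (edgeCountOn_pos hUC hneC (by omega)).ne'
  set m : ℝ := (edgeCountOn G C : ℝ) with hm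
  have hmpos : (0:ℝ) < m := by
    rw [hm]
    exact_mod_cast Nat.pos_of_ne_zero hm0
  have hinj : Set.InjOn (clique q c) ↑I := by
    intro k _ l _ h
    by_contra hkl
    obtain ⟨x, hx⟩ := clique_nonempty hcpos k
    have hx' : x ∈ clique q c l := h ▸ hx
    exact hkl ((mem_clique.mp hx).symm.trans (mem_clique.mp hx'))
  have hQ : QmodOn G C (cliquePartition C hUC hcpos) =
      ∑ k ∈ I, ((c:ℝ)*((c:ℝ)-1)/(2*m)
        - (dsum G C (clique q c k)/(2*m))^2) := by
    rw [Qsplit _ _ hm0]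
    show ∑ t ∈ I.image (clique q c), _ = _
    rw [Finset.sum_image hinj]
    refine Finset.sum_congr rfl fun k _ => ?_
    rw [esum_sub_clique (fun x hx => mem_clique.mp hx), card_clique]
  have hsum_d : ∑ k ∈ I, dsum G C (clique q c k) = 2*m := by
    have h1 : ∑ t ∈ (cliquePartition C hUC hcpos).parts, ∑ u ∈ t, (degOn G C u : ℝ)
        = ∑ u ∈ C, (degOn G C u : ℝ) := sum_parts _ _
    have h2 : ∑ t ∈ I.image (clique q c), ∑ u ∈ t, (degOn G C u : ℝ)
        = ∑ k ∈ I, dsum G C (clique q c k) := by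
      rw [Finset.sum_image hinj]; rfl
    have h3 : (∑ u ∈ C, (degOn G C u : ℝ)) = 2*m := dsum_self G C
    rw [← h2]
    have h1' : ∑ t ∈ Finset.image (clique q c) I, ∑ u ∈ t, (degOn G C u : ℝ)
        = ∑ u ∈ C, (degOn G C u : ℝ) := h1
    rw [h1', h3]
  set A : ℝ := (c:ℝ)*((c:ℝ)-1)/(2*m) with hA
  set B : ℝ := (c:ℝ)*((c:ℝ)+1)/(2*m) with hB
  have hcR : (4:ℝ) ≤ (c:ℝ) := by exact_mod_cast hc
  have hApos : 0 < A := by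
    rw [hA]
    apply div_pos (by nlinarith) (by linarith)
  have hBpos : 0 < B := by
    rw [hB]
    apply div_pos (by nlinarith) (by linarith)
  have hdk : ∀ k ∈ I, (dsum G C (clique q c k)/(2*m))^2
      ≤ B * (dsum G C (clique q c k)/(2*m)) := by
    intro k _
    have h0 : 0 ≤ dsum G C (clique q c k) := dsum_nonneg G C _
    have h1 : dsum G C (clique q c k) ≤ (c:ℝ) * ((c:ℝ)+1) := by
      have := dsum_upper C (clique q c k)
      rwa [card_clique] at this
    have h2' : dsum G C (clique q c k)/(2*m) ≤ B := by
      rw [hB]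
      exact (div_le_div_iff_of_pos_right (by linarith : (0:ℝ) < 2*m)).mpr h1
    have h3' : 0 ≤ dsum G C (clique q c k)/(2*m) := by positivity
    nlinarith
  have hfin : 0 < 2*A - B := by
    have : 2*A - B = (c:ℝ)*((c:ℝ)-3)/(2*m) := by
      rw [hA, hB]; field_simp; ring
    rw [this]
    apply div_pos (by nlinarith) (by linarith)
  calc (0:ℝ) < 2*A - B := hfin
    _ ≤ (I.card : ℝ)*A - B := by
        have : (2:ℝ) ≤ (I.card : ℝ) := by exact_mod_cast hL
        nlinarith
    _ = ∑ k ∈ I, (A - B * (dsum G C (clique q c k)/(2*m))) := by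
        rw [Finset.sum_sub_distrib, Finset.sum_const, nsmul_eq_mul, ← Finset.mul_sum,
          ← Finset.sum_div, hsum_d]
        congr 1
        field_simp
    _ ≤ ∑ k ∈ I, (A - (dsum G C (clique q c k)/(2*m))^2) :=
        Finset.sum_le_sum fun k hk => by
          have := hdk k hk
          linarith
    _ = QmodOn G C (cliquePartition C hUC hcpos) := hQ.symm

set_option maxHeartbeats 1600000 in
lemma no_split {C : Finset (Fin q × Fin c)} (hUC : IsUC C) (hc : 17 ≤ c)
    {i j : Fin q} (hij : i ≠ j) (hi : clique q c i ⊆ C) (hj : clique q c j ⊆ C)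
    (P : Finpartition C)
    (hmax : ∀ P' : Finpartition C,
      QmodOn (ringOfCliques q c) C P' ≤ QmodOn (ringOfCliques q c) C P)
    (k : Fin q) (hk : clique q c k ⊆ C) :
    ∃ t ∈ P.parts, clique q c k ⊆ t := by
  classical
  by_contra hno
  push_neg at hno
  set G := ringOfCliques q c with hG
  set K := clique q c k with hK
  have hcpos : 0 < c := by omega
  have hKne : K.Nonempty := clique_nonempty hcpos k
  have hneC : C.Nonempty := hKne.mono hk
  have hm0 : edgeCountOn G C ≠ 0 := (edgeCountOn_pos hUC hneC (by omega)).ne'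
  set m : ℝ := (edgeCountOn G C : ℝ) with hm
  have hmpos : (0:ℝ) < m := by
    rw [hm]; exact_mod_cast Nat.pos_of_ne_zero hm0
  have hcR : (17:ℝ) ≤ (c:ℝ) := by exact_mod_cast hc
  have hmlow : (c:ℝ)*((c:ℝ)-1) ≤ m := by
    have h1 := edgeCountOn_lower hUC hij hi hj
    have h2 : ((c*(c-1) : ℕ) : ℝ) ≤ m := by rw [hm]; exact_mod_cast h1
    have h3 : ((c*(c-1) : ℕ) : ℝ) = (c:ℝ)*((c:ℝ)-1) := by
      push_cast [Nat.cast_sub (by omega : 1 ≤ c)]; ring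
    linarith [h3 ▸ h2]
  -- choose the part t₁ meeting K with minimal dsum of its part outside K
  set M := P.parts.filter (fun t => (t ∩ K).Nonempty) with hM
  have hMne : M.Nonempty := by
    obtain ⟨x, hx⟩ := hKne
    obtain ⟨t, ht, hxt⟩ := P.exists_mem (hk hx)
    exact ⟨t, Finset.mem_filter.mpr ⟨ht, ⟨x, Finset.mem_inter.mpr ⟨hxt, hx⟩⟩⟩⟩
  obtain ⟨t₁, ht₁M, hmin⟩ := Finset.exists_min_image M (fun t => dsum G C (t \ K)) hMne
  have ht₁ : t₁ ∈ P.parts := (Finset.mem_filter.mp ht₁M).1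
  -- the modified partition
  set newparts : Finset (Finset (Fin q × Fin c)) :=
    insert (t₁ ∪ K) ((((P.parts.erase t₁)).image (fun t => t \ K)).erase ∅) with hnp
  have hdisjK : ∀ t : Finset (Fin q × Fin c), Disjoint (t \ K) K := fun t => Finset.sdiff_disjoint
  have hsubC : ∀ t ∈ P.parts, t ⊆ C := fun t ht => P.le ht
  have hmem_np : ∀ a ∈ newparts, a = t₁ ∪ K ∨
      ∃ t ∈ P.parts.erase t₁, a = t \ K ∧ a ≠ ∅ := by
    intro a ha
    rw [hnp, Finset.mem_insert] at ha
    rcases ha with ha | ha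
    · exact Or.inl ha
    · obtain ⟨hane, ha⟩ := Finset.mem_erase.mp ha
      obtain ⟨t, ht, rfl⟩ := Finset.mem_image.mp ha
      exact Or.inr ⟨t, ht, rfl, hane⟩
  have hP' : ∃ P' : Finpartition C, P'.parts = newparts := by
    refine ⟨⟨newparts, ?_, ?_, ?_⟩, rfl⟩
    · rw [Finset.supIndep_iff_pairwiseDisjoint]
      intro a ha b hb hab
      have hda : ∀ s t : Finset (Fin q × Fin c), s ∈ P.parts.erase t₁ →
          Disjoint (t₁ ∪ K) (s \ K) := by
        intro s t hs
        obtain ⟨hsne, hsP⟩ := Finset.mem_erase.mp hs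
        apply Finset.disjoint_union_left.mpr
        constructor
        · exact Finset.disjoint_of_subset_right Finset.sdiff_subset
            (P.disjoint ht₁ hsP (Ne.symm hsne))
        · exact (Finset.sdiff_disjoint (s := K) (t := s)).symm
      rcases hmem_np a (Finset.mem_coe.mp ha) with ha' | ⟨t, ht, rfl, _⟩ <;>
        rcases hmem_np b (Finset.mem_coe.mp hb) with hb' | ⟨s, hs, rfl, _⟩
      · exact absurd (ha'.trans hb'.symm) hab
      · rw [ha']; exact hda s s hs
      · rw [hb']; exact (hda t t ht).symm
      · obtain ⟨htne, htP⟩ := Finset.mem_erase.mp ht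
        obtain ⟨hsne, hsP⟩ := Finset.mem_erase.mp hs
        have hts : t ≠ s := by
          rintro rfl; exact hab rfl
        exact Finset.disjoint_of_subset_left Finset.sdiff_subset
          (Finset.disjoint_of_subset_right Finset.sdiff_subset
            (P.disjoint htP hsP hts))
    · apply le_antisymm
      · apply Finset.sup_le
        intro a ha
        rcases hmem_np a ha with ha' | ⟨t, ht, rfl, _⟩
        · rw [ha']
          exact Finset.union_subset (hsubC t₁ ht₁) hk
        · exact (Finset.sdiff_subset).trans (hsubC t (Finset.mem_of_mem_erase ht))
      · intro x hx
        rw [Finset.mem_sup]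
        by_cases hxK : x ∈ K
        · exact ⟨t₁ ∪ K, Finset.mem_insert_self _ _, Finset.mem_union_right _ hxK⟩
        · obtain ⟨t, ht, hxt⟩ := P.exists_mem hx
          by_cases htt : t = t₁
          · exact ⟨t₁ ∪ K, Finset.mem_insert_self _ _,
              Finset.mem_union_left _ (htt ▸ hxt)⟩
          · refine ⟨t \ K, ?_, Finset.mem_sdiff.mpr ⟨hxt, hxK⟩⟩
            rw [hnp]
            apply Finset.mem_insert_of_mem
            apply Finset.mem_erase.mpr
            constructor
            · rw [← Finset.nonempty_iff_ne_empty]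
              exact ⟨x, Finset.mem_sdiff.mpr ⟨hxt, hxK⟩⟩
            · exact Finset.mem_image.mpr ⟨t, Finset.mem_erase.mpr ⟨htt, ht⟩, rfl⟩
    · intro hbot
      rcases hmem_np ⊥ hbot with h' | ⟨t, _, _, hne⟩
      · obtain ⟨x, hx⟩ := hKne
        have : x ∈ (⊥ : Finset (Fin q × Fin c)) := h' ▸ Finset.mem_union_right _ hx
        exact absurd this (Finset.notMem_empty x)
      · exact hne rfl
  obtain ⟨P', hP'parts⟩ := hP'
  -- the quantity f and its sums
  set f : Finset (Fin q × Fin c) → ℝ := fun t =>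
    esum G t / (2*m) - (dsum G C t/(2*m))^2 with hf
  have hf0 : f ∅ = 0 := by
    rw [hf]; simp [esum, dsum]
  have hQP : QmodOn G C P = f t₁ + ∑ t ∈ P.parts.erase t₁, f t := by
    rw [Qsplit _ _ hm0, ← Finset.add_sum_erase _ f ht₁]
  have hnotmem : t₁ ∪ K ∉ ((P.parts.erase t₁).image (fun t => t \ K)).erase ∅ := by
    intro hmem
    obtain ⟨hne, hmem⟩ := Finset.mem_erase.mp hmem
    obtain ⟨t, ht, heq⟩ := Finset.mem_image.mp hmem
    obtain ⟨x, hx⟩ := hKne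
    have hx1 : x ∈ t \ K := heq ▸ Finset.mem_union_right t₁ hx
    exact (Finset.mem_sdiff.mp hx1).2 hx
  have hQP' : QmodOn G C P' = f (t₁ ∪ K) + ∑ t ∈ P.parts.erase t₁, f (t \ K) := by
    rw [Qsplit _ _ hm0, hP'parts, hnp, Finset.sum_insert hnotmem]
    congr 1
    have hinj' : ∀ a ∈ (P.parts.erase t₁).filter (fun t => (t \ K).Nonempty),
        ∀ b ∈ (P.parts.erase t₁).filter (fun t => (t \ K).Nonempty),
        a \ K = b \ K → a = b := by
      intro a ha b hb heq
      by_contra hab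
      obtain ⟨haP, hanon⟩ := Finset.mem_filter.mp ha
      obtain ⟨hbP, _⟩ := Finset.mem_filter.mp hb
      have hdisj := P.disjoint (Finset.mem_of_mem_erase haP) (Finset.mem_of_mem_erase hbP) hab
      have hdisj2 : Disjoint (a \ K) (b \ K) :=
        Finset.disjoint_of_subset_left Finset.sdiff_subset
          (Finset.disjoint_of_subset_right Finset.sdiff_subset hdisj)
      rw [heq] at hdisj2 hanon
      exact hanon.ne_empty (disjoint_self.mp hdisj2)
    calc ∑ t' ∈ ((P.parts.erase t₁).image (fun t => t \ K)).erase ∅, f t'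
        = ∑ t' ∈ (P.parts.erase t₁).image (fun t => t \ K), f t' := Finset.sum_erase _ hf0
      _ = ∑ t' ∈ ((P.parts.erase t₁).filter (fun t => (t \ K).Nonempty)).image
            (fun t => t \ K), f t' := by
          symm
          have hsubim := Finset.image_subset_image (f := fun t => t \ K)
            (Finset.filter_subset (fun t => (t \ K).Nonempty) (P.parts.erase t₁))
          apply Finset.sum_subset hsubim
          intro a ha hans
          obtain ⟨t, ht, rfl⟩ := Finset.mem_image.mp ha
          by_cases hne : (t \ K).Nonempty
          · exact (hans (Finset.mem_image.mpr ⟨t, Finset.mem_filter.mpr ⟨ht, hne⟩, rfl⟩)).elim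
          · rw [Finset.not_nonempty_iff_eq_empty.mp hne]
            exact hf0
      _ = ∑ t ∈ (P.parts.erase t₁).filter (fun t => (t \ K).Nonempty), f (t \ K) :=
          Finset.sum_image hinj'
      _ = ∑ t ∈ P.parts.erase t₁, f (t \ K) := by
          apply Finset.sum_subset (Finset.filter_subset _ _)
          intro t ht htn
          have hne : ¬ (t \ K).Nonempty := fun hn => htn (Finset.mem_filter.mpr ⟨ht, hn⟩)
          rw [Finset.not_nonempty_iff_eq_empty.mp hne]
          exact hf0
  -- key quantitative estimate
  have hdelta : 0 < (f (t₁ ∪ K) + ∑ t ∈ P.parts.erase t₁, f (t \ K)) -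
      (f t₁ + ∑ t ∈ P.parts.erase t₁, f t) := by
    set Φ : Finset (Fin q × Fin c) → ℝ := fun t => 2*m*esum G t - (dsum G C t)^2 with hΦ
    have hfΦ : ∀ t, f t = Φ t / (4*m^2) := by
      intro t
      simp only [hf, hΦ]
      field_simp
      ring
    have h4m : (0:ℝ) < 4*m^2 := by positivity
    suffices hnum : 0 < Φ (t₁ ∪ K) + (∑ t ∈ P.parts.erase t₁, Φ (t \ K)) - Φ t₁ -
        (∑ t ∈ P.parts.erase t₁, Φ t) by
      have heq : (f (t₁ ∪ K) + ∑ t ∈ P.parts.erase t₁, f (t \ K)) -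
          (f t₁ + ∑ t ∈ P.parts.erase t₁, f t)
          = (Φ (t₁ ∪ K) + (∑ t ∈ P.parts.erase t₁, Φ (t \ K)) - Φ t₁ -
            (∑ t ∈ P.parts.erase t₁, Φ t)) / (4*m^2) := by
        simp only [hfΦ]
        rw [← Finset.sum_div, ← Finset.sum_div]
        ring
      rw [heq]
      exact div_pos hnum h4m
    -- abbreviations
    set DK : ℝ := dsum G C K with hDKdef
    set b₁ : ℝ := dsum G C (t₁ \ K) with hb₁def
    set SS : ℝ := ∑ t ∈ P.parts, ((t ∩ K).card : ℝ)^2 with hSSdef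
    set E1 : ℝ := ∑ t ∈ P.parts, esum G (t ∩ K) with hE1def
    set X1 : ℝ := ∑ t ∈ P.parts, cross G (t \ K) (t ∩ K) with hX1def
    set SbD : ℝ := ∑ t ∈ P.parts, 2 * dsum G C (t \ K) * dsum G C (t ∩ K) with hSbDdef
    set Q2 : ℝ := ∑ t ∈ P.parts, (dsum G C (t ∩ K))^2 with hQ2def
    set g : Finset (Fin q × Fin c) → ℝ := fun t =>
      -(2*m*esum G (t ∩ K)) - 4*m*cross G (t \ K) (t ∩ K)
        + 2*dsum G C (t \ K)*dsum G C (t ∩ K) + (dsum G C (t ∩ K))^2 with hg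
    -- decompositions
    have hdisj_in : ∀ t : Finset (Fin q × Fin c), Disjoint (t \ K) (t ∩ K) :=
      fun t => Finset.disjoint_of_subset_right Finset.inter_subset_right (hdisjK t)
    have hdecomp_e : ∀ t : Finset (Fin q × Fin c),
        esum G t = esum G (t \ K) + esum G (t ∩ K) + 2*cross G (t \ K) (t ∩ K) := by
      intro t
      have := esum_union G (hdisj_in t)
      rwa [Finset.sdiff_union_inter] at this
    have hdecomp_d : ∀ t : Finset (Fin q × Fin c),
        dsum G C t = dsum G C (t \ K) + dsum G C (t ∩ K) := by
      intro t
      have := dsum_union G C (hdisj_in t)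
      rwa [Finset.sdiff_union_inter] at this
    have hB1 : ∀ t : Finset (Fin q × Fin c), Φ (t \ K) - Φ t = g t := by
      intro t
      simp only [hΦ, hg]
      rw [hdecomp_e t, hdecomp_d t]
      ring
    have hB2 : Φ (t₁ ∪ K) - Φ t₁ = 2*m*esum G K + 4*m*cross G (t₁ \ K) K
        - 2*m*esum G (t₁ ∩ K) - 4*m*cross G (t₁ \ K) (t₁ ∩ K)
        - (b₁ + DK)^2 + (b₁ + dsum G C (t₁ ∩ K))^2 := by
      have h1 : esum G (t₁ ∪ K) = esum G (t₁ \ K) + esum G K + 2*cross G (t₁ \ K) K := by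
        have := esum_union G (hdisjK t₁)
        rwa [Finset.sdiff_union_self_eq_union] at this
      have h2 : dsum G C (t₁ ∪ K) = b₁ + DK := by
        have := dsum_union G C (hdisjK t₁)
        rwa [Finset.sdiff_union_self_eq_union] at this
      simp only [hΦ]
      rw [h1, h2, hdecomp_e t₁, hdecomp_d t₁]
      ring
    have hEsum : (∑ t ∈ P.parts.erase t₁, Φ (t \ K)) - (∑ t ∈ P.parts.erase t₁, Φ t)
        = (∑ t ∈ P.parts, g t) - g t₁ := by
      rw [← Finset.sum_sub_distrib, Finset.sum_congr rfl (fun t _ => hB1 t)]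
      have := Finset.add_sum_erase P.parts g ht₁
      linarith
    have hsum_g : ∑ t ∈ P.parts, g t = -(2*m*E1) - 4*m*X1 + SbD + Q2 := by
      have hstep : ∑ t ∈ P.parts, g t = ∑ t ∈ P.parts,
          ((-(2*m*esum G (t ∩ K))) + (-(4*m*cross G (t \ K) (t ∩ K)))
            + 2*dsum G C (t \ K)*dsum G C (t ∩ K) + (dsum G C (t ∩ K))^2) :=
        Finset.sum_congr rfl fun t _ => by simp only [hg]; ring
      rw [hstep, Finset.sum_add_distrib, Finset.sum_add_distrib, Finset.sum_add_distrib,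
        Finset.sum_neg_distrib, Finset.sum_neg_distrib, ← Finset.mul_sum, ← Finset.mul_sum,
        hE1def, hX1def, hSbDdef, hQ2def]
      ring
    have hgt₁ : g t₁ = -(2*m*esum G (t₁ ∩ K)) - 4*m*cross G (t₁ \ K) (t₁ ∩ K)
        + 2*b₁*dsum G C (t₁ ∩ K) + (dsum G C (t₁ ∩ K))^2 := by
      simp only [hg, hb₁def]
    -- counting facts
    have hKcard : (K.card : ℝ) = (c : ℝ) := by rw [hK, card_clique]
    have hSsum : ∑ t ∈ P.parts, ((t ∩ K).card : ℝ) = (c:ℝ) := by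
      have h := sum_parts_inter C P K hk (fun _ => (1:ℝ))
      simp only [Finset.sum_const, nsmul_eq_mul, mul_one] at h
      rw [h, hKcard]
    have hDsum : ∑ t ∈ P.parts, dsum G C (t ∩ K) = DK := by
      rw [hDKdef]
      unfold dsum
      exact sum_parts_inter C P K hk _
    have hscard : ∀ t ∈ P.parts, ((t ∩ K).card : ℝ) ≤ (c:ℝ) - 1 := by
      intro t ht
      have h1 : t ∩ K ⊆ K := Finset.inter_subset_right
      have hKc : K.card = c := by rw [hK, card_clique]
      have h2 : (t ∩ K).card ≤ c := by
        have := Finset.card_le_card h1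
        omega
      have h3 : (t ∩ K).card ≠ c := by
        intro hcard
        have heq : t ∩ K = K := Finset.eq_of_subset_of_card_le h1 (by omega)
        exact hno t ht (by rw [← heq]; exact Finset.inter_subset_left)
      have h4 : (t ∩ K).card ≤ c - 1 := by omega
      calc ((t ∩ K).card : ℝ) ≤ ((c - 1 : ℕ) : ℝ) := by exact_mod_cast h4
        _ = (c:ℝ) - 1 := by push_cast [Nat.cast_sub (by omega : 1 ≤ c)]; ring
    have hesum_e : ∀ t ∈ P.parts, esum G (t ∩ K)
        = ((t ∩ K).card : ℝ) * (((t ∩ K).card : ℝ) - 1) := by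
      intro t _
      apply esum_sub_clique (i := k)
      intro x hx
      have hxK : x ∈ clique q c k := by
        rw [← hK]
        exact Finset.mem_of_mem_inter_right hx
      exact mem_clique.mp hxK
    have hesumK : esum G K = (c:ℝ) * ((c:ℝ) - 1) := by
      have hall : ∀ x ∈ K, x.1 = k := by
        intro x hx
        rw [hK] at hx
        exact mem_clique.mp hx
      have := esum_sub_clique hall
      rwa [hKcard] at this
    have hE1eq : E1 = SS - (c:ℝ) := by
      rw [hE1def, hSSdef, Finset.sum_congr rfl hesum_e, ← hSsum, ← Finset.sum_sub_distrib]
      exact Finset.sum_congr rfl fun t _ => by ring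
    have hSSle : SS ≤ (c:ℝ) * ((c:ℝ) - 1) := by
      rw [hSSdef]
      calc ∑ t ∈ P.parts, ((t ∩ K).card : ℝ)^2
          ≤ ∑ t ∈ P.parts, ((c:ℝ) - 1) * ((t ∩ K).card : ℝ) := by
            apply Finset.sum_le_sum
            intro t ht
            have h1 : (0:ℝ) ≤ ((t ∩ K).card : ℝ) := Nat.cast_nonneg _
            nlinarith only [hscard t ht, h1]
        _ = ((c:ℝ) - 1) * ∑ t ∈ P.parts, ((t ∩ K).card : ℝ) := by rw [Finset.mul_sum]
        _ = (c:ℝ) * ((c:ℝ) - 1) := by rw [hSsum]; ring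
    have hD_le : ∀ t ∈ P.parts, dsum G C (t ∩ K) ≤ ((c:ℝ)+1) * ((t ∩ K).card : ℝ) := by
      intro t _
      have := dsum_upper C (t ∩ K)
      rw [hG]
      linarith [this]
    have hD_nonneg : ∀ t : Finset (Fin q × Fin c), 0 ≤ dsum G C (t ∩ K) :=
      fun t => dsum_nonneg G C _
    -- cross bounds
    have hcross1 : 0 ≤ cross G (t₁ \ K) K := cross_nonneg G _ _
    have hX1nonneg : 0 ≤ X1 := by
      rw [hX1def]
      exact Finset.sum_nonneg fun t _ => cross_nonneg G _ _
    have hX1le : X1 ≤ 2 := by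
      rw [hX1def]
      have hstep : ∀ t ∈ P.parts, cross G (t \ K) (t ∩ K) ≤ cross G (t ∩ K) (C \ K) := by
        intro t ht
        rw [cross_comm]
        exact cross_mono_right G _ (Finset.sdiff_subset_sdiff (P.le ht) (le_refl K))
      calc ∑ t ∈ P.parts, cross G (t \ K) (t ∩ K)
          ≤ ∑ t ∈ P.parts, cross G (t ∩ K) (C \ K) := Finset.sum_le_sum hstep
        _ = cross G K (C \ K) := by
            unfold cross
            exact sum_parts_inter C P K hk _
        _ ≤ 2 := by
            rw [hG]
            apply cross_le_two hcpos
            · intro x hx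
              rw [hK] at hx
              exact mem_clique.mp hx
            · intro v hv hvk
              apply (Finset.mem_sdiff.mp hv).2
              rw [hK]
              exact mem_clique.mpr hvk
    have hSbDge : 2*b₁*DK ≤ SbD := by
      rw [hSbDdef, ← hDsum, Finset.mul_sum]
      apply Finset.sum_le_sum
      intro t ht
      by_cases htM : t ∈ M
      · have hb : b₁ ≤ dsum G C (t \ K) := hmin t htM
        have hD0 := hD_nonneg t
        have := mul_nonneg (sub_nonneg.mpr hb) hD0
        nlinarith only [this]
      · have hempty : t ∩ K = ∅ := by
          by_contra hne
          exact htM (Finset.mem_filter.mpr ⟨ht, Finset.nonempty_iff_ne_empty.mpr hne⟩)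
        have h0 : dsum G C (t ∩ K) = 0 := by
          rw [hempty]
          simp [dsum]
        rw [h0, mul_zero, mul_zero]
    -- pairwise square identity
    have pair_id : ∀ gg : Finset (Fin q × Fin c) → ℝ,
        (∑ t ∈ P.parts, gg t)^2 - ∑ t ∈ P.parts, (gg t)^2
        = ∑ t ∈ P.parts, ∑ t' ∈ P.parts.erase t, gg t * gg t' := by
      intro gg
      have h1 : (∑ t ∈ P.parts, gg t)^2 = ∑ t ∈ P.parts, ∑ t' ∈ P.parts, gg t * gg t' := by
        rw [sq, Finset.sum_mul_sum]
      have h2 : ∀ t ∈ P.parts, ∑ t' ∈ P.parts, gg t * gg t'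
          = gg t * gg t + ∑ t' ∈ P.parts.erase t, gg t * gg t' :=
        fun t ht => (Finset.add_sum_erase _ _ ht).symm
      rw [h1, Finset.sum_congr rfl h2, Finset.sum_add_distrib]
      have : ∑ t ∈ P.parts, gg t * gg t = ∑ t ∈ P.parts, (gg t)^2 :=
        Finset.sum_congr rfl fun t _ => (sq (gg t)).symm ▸ by ring
      rw [this]
      ring
    have hQ2DK : DK^2 - Q2 ≤ ((c:ℝ)+1)^2 * ((c:ℝ)^2 - SS) := by
      have hid1 : DK^2 - Q2 = ∑ t ∈ P.parts, ∑ t' ∈ P.parts.erase t,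
          dsum G C (t ∩ K) * dsum G C (t' ∩ K) := by
        rw [← hDsum, hQ2def]
        exact pair_id _
      have hid2 : ((c:ℝ)+1)^2 * ((c:ℝ)^2 - SS) = ∑ t ∈ P.parts, ∑ t' ∈ P.parts.erase t,
          (((c:ℝ)+1) * ((t ∩ K).card : ℝ)) * (((c:ℝ)+1) * ((t' ∩ K).card : ℝ)) := by
        have h3 := pair_id (fun t => ((c:ℝ)+1) * ((t ∩ K).card : ℝ))
        have h4 : ∑ t ∈ P.parts, ((c:ℝ)+1) * ((t ∩ K).card : ℝ)
            = ((c:ℝ)+1) * (c:ℝ) := by rw [← Finset.mul_sum, hSsum]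
        have h5 : ∑ t ∈ P.parts, (((c:ℝ)+1) * ((t ∩ K).card : ℝ))^2
            = ((c:ℝ)+1)^2 * SS := by
          rw [hSSdef, Finset.mul_sum]
          exact Finset.sum_congr rfl fun t _ => by ring
        rw [h4, h5] at h3
        rw [← h3]
        ring
      rw [hid1, hid2]
      apply Finset.sum_le_sum
      intro t ht
      apply Finset.sum_le_sum
      intro t' ht'
      have ht'p : t' ∈ P.parts := Finset.mem_of_mem_erase ht'
      have h6 := hD_le t ht
      have h7 := hD_le t' ht'p
      have h8 := hD_nonneg t
      have h9 := hD_nonneg t'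
      have h10 : (0:ℝ) ≤ ((c:ℝ)+1) * ((t ∩ K).card : ℝ) :=
        mul_nonneg (by linarith) (Nat.cast_nonneg _)
      exact mul_le_mul h6 h7 h9 h10
    -- final assembly
    have hNval : Φ (t₁ ∪ K) + (∑ t ∈ P.parts.erase t₁, Φ (t \ K)) - Φ t₁ -
        (∑ t ∈ P.parts.erase t₁, Φ t)
        = 2*m*((c:ℝ)^2 - SS) + 4*m*(cross G (t₁ \ K) K) - 4*m*X1
          + (SbD - 2*b₁*DK) + (Q2 - DK^2) := by
      have hA : Φ (t₁ ∪ K) + (∑ t ∈ P.parts.erase t₁, Φ (t \ K)) - Φ t₁ -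
          (∑ t ∈ P.parts.erase t₁, Φ t)
          = (Φ (t₁ ∪ K) - Φ t₁) + ((∑ t ∈ P.parts, g t) - g t₁) := by
        linarith [hEsum]
      rw [hA, hB2, hsum_g, hgt₁, hE1eq, hesumK]
      ring
    rw [hNval]
    have hG0 : (c:ℝ) ≤ (c:ℝ)^2 - SS := by nlinarith only [hSSle]
    have hc2 : 17*(c:ℝ) ≤ (c:ℝ)^2 := by
      nlinarith only [hcR, sq_nonneg ((c:ℝ) - 17)]
    have k1 : (0:ℝ) ≤ 2*m - ((c:ℝ)+1)^2 := by nlinarith only [hmlow, hcR, hc2]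
    have k2 : (0:ℝ) ≤ ((c:ℝ)^2 - SS - (c:ℝ)) * (2*m - ((c:ℝ)+1)^2) :=
      mul_nonneg (by linarith only [hG0]) k1
    have k3 : (0:ℝ) ≤ (m - (c:ℝ)*((c:ℝ)-1)) * (2*(c:ℝ) - 8) :=
      mul_nonneg (by linarith only [hmlow]) (by linarith only [hcR])
    have k5 : (0:ℝ) ≤ 4*m*(cross G (t₁ \ K) K) :=
      mul_nonneg (by linarith only [hmpos]) hcross1
    have k6 : (0:ℝ) ≤ m * (2 - X1) := mul_nonneg hmpos.le (by linarith only [hX1le])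
    have h1 : Q2 - DK^2 ≥ -(((c:ℝ)+1)^2 * ((c:ℝ)^2 - SS)) := by linarith only [hQ2DK]
    have h2 : SbD - 2*b₁*DK ≥ 0 := by linarith only [hSbDge]
    have h4 : -(4*m*X1) ≥ -(8*m) := by nlinarith only [k6]
    have h6 : 0 < (c:ℝ)^2 - 12*(c:ℝ) + 7 := by linarith only [hc2, hcR]
    have h7 : 0 < (c:ℝ) * ((c:ℝ)^2 - 12*(c:ℝ) + 7) :=
      mul_pos (by linarith only [hcR]) h6
    have h5 : 0 < 2*m*((c:ℝ)^2 - SS) - 8*m - ((c:ℝ)+1)^2*((c:ℝ)^2 - SS) := by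
      nlinarith only [k2, k3, h7]
    linarith only [h1, h2, h4, h5, k5]
  have := hmax P'
  rw [hQP, hQP'] at this
  linarith

lemma clique_sub_of_mem_image {C : Finset (Fin q × Fin c)} (hUC : IsUC C)
    {i : Fin q} (hi : i ∈ C.image Prod.fst) : clique q c i ⊆ C := by
  obtain ⟨x, hx, rfl⟩ := Finset.mem_image.mp hi
  exact hUC x hx

lemma L1_eq_clique {C : Finset (Fin q × Fin c)} (hUC : IsUC C) (hne : C.Nonempty)
    (hL : (C.image Prod.fst).card = 1) : ∃ i, C = clique q c i := by
  obtain ⟨i, hI⟩ := Finset.card_eq_one.mp hL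
  refine ⟨i, Finset.Subset.antisymm ?_ ?_⟩
  · intro x hx
    have hmem : x.1 ∈ C.image Prod.fst := Finset.mem_image_of_mem _ hx
    rw [hI, Finset.mem_singleton] at hmem
    exact mem_clique.mpr hmem
  · obtain ⟨x₀, hx₀⟩ := hne
    have hx1 : x₀.1 = i := by
      have hmem := Finset.mem_image_of_mem Prod.fst hx₀
      rw [hI, Finset.mem_singleton] at hmem
      exact hmem
    have := hUC x₀ hx₀
    rwa [hx1] at this

lemma two_of_image {C : Finset (Fin q × Fin c)} (hUC : IsUC C) (hne : C.Nonempty)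
    (hL : (C.image Prod.fst).card ≠ 1) :
    ∃ i j : Fin q, i ≠ j ∧ clique q c i ⊆ C ∧ clique q c j ⊆ C := by
  have h1 : 1 ≤ (C.image Prod.fst).card :=
    Finset.card_pos.mpr (hne.image Prod.fst)
  have h2 : 2 ≤ (C.image Prod.fst).card := by omega
  obtain ⟨i, hi, j, hj, hij⟩ := Finset.one_lt_card.mp h2
  exact ⟨i, j, hij, clique_sub_of_mem_image hUC hi, clique_sub_of_mem_image hUC hj⟩

lemma indiscrete_Q_zero {C : Finset (Fin q × Fin c)} (hUC : IsUC C) (hne : C.Nonempty)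
    (hc2 : 2 ≤ c) (P₁ : Finpartition C) (hp : P₁.parts = {C}) :
    QmodOn (ringOfCliques q c) C P₁ = 0 :=
  Qtrivial _ C (edgeCountOn_pos hUC hne hc2).ne' P₁ hp

lemma leaves_sub (hc : 17 ≤ c) {C : Finset (Fin q × Fin c)} (T : HTree C) :
    IsHCS (ringOfCliques q c) T → IsUC C → C.Nonempty →
    T.leavesSet ⊆ Set.range (clique q c) := by
  induction T with
  | leaf C =>
    intro hT hUC hne
    have hT' : ∀ P P₁ : Finpartition C, P₁.parts = {C} →
        QmodOn (ringOfCliques q c) C P ≤ QmodOn (ringOfCliques q c) C P₁ := hT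
    intro D hD
    have hDC : D = C := hD
    subst hDC
    by_cases hL : (D.image Prod.fst).card = 1
    · obtain ⟨i, rfl⟩ := L1_eq_clique hUC hne hL
      exact ⟨i, rfl⟩
    · exfalso
      obtain ⟨i, j, hij, hi, hj⟩ := two_of_image hUC hne hL
      obtain ⟨P, hP⟩ := exists_Q_pos hUC (by omega) hij hi hj
      have hbot : D ≠ ⊥ := by
        rw [Finset.bot_eq_empty]
        exact hne.ne_empty
      have hle := hT' P (Finpartition.indiscrete hbot) rfl
      rw [indiscrete_Q_zero hUC hne (by omega) (Finpartition.indiscrete hbot) rfl] at hle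
      linarith
  | node C P h2 child ih =>
    intro hT hUC hne
    have hmax : ∀ P' : Finpartition C,
        QmodOn (ringOfCliques q c) C P' ≤ QmodOn (ringOfCliques q c) C P := hT.1
    have hrec : ∀ t (ht : t ∈ P.parts), IsHCS (ringOfCliques q c) (child t ht) := hT.2
    by_cases hL : (C.image Prod.fst).card = 1
    · exfalso
      obtain ⟨i, rfl⟩ := L1_eq_clique hUC hne hL
      have hneg := Q_neg_of_clique (by omega : 2 ≤ c) P h2
      have hbot : clique q c i ≠ ⊥ := by
        rw [Finset.bot_eq_empty]
        exact hne.ne_empty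
      have h0 := indiscrete_Q_zero hUC hne (by omega)
        (Finpartition.indiscrete hbot) rfl
      have := hmax (Finpartition.indiscrete hbot)
      linarith
    · obtain ⟨i, j, hij, hi, hj⟩ := two_of_image hUC hne hL
      have hpartUC : ∀ t ∈ P.parts, IsUC t := by
        intro t ht x hx
        have hxC : x ∈ C := P.le ht hx
        have hsub : clique q c x.1 ⊆ C :=
          clique_sub_of_mem_image hUC (Finset.mem_image_of_mem _ hxC)
        obtain ⟨s, hs, hss⟩ := no_split hUC hc hij hi hj P hmax x.1 hsub
        have hxs : x ∈ s := hss (mem_clique.mpr rfl)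
        have : t = s := P.eq_of_mem_parts ht hs hx hxs
        rw [this]
        exact hss
      intro D hD
      simp only [HTree.leavesSet] at hD
      rw [Set.mem_iUnion] at hD
      obtain ⟨t, hD⟩ := hD
      rw [Set.mem_iUnion] at hD
      obtain ⟨ht, hD⟩ := hD
      exact ih t ht (hrec t ht) (hpartUC t ht) (P.nonempty_of_mem_parts ht) hD

lemma leaves_cover {C : Finset (Fin q × Fin c)} (T : HTree C) :
    ∀ x ∈ C, ∃ D ∈ T.leavesSet, x ∈ D := by
  induction T with
  | leaf C =>
    intro x hx
    exact ⟨C, rfl, hx⟩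
  | node C P h2 child ih =>
    intro x hx
    obtain ⟨t, ht, hxt⟩ := P.exists_mem hx
    obtain ⟨D, hD, hxD⟩ := ih t ht x hxt
    refine ⟨D, ?_, hxD⟩
    simp only [HTree.leavesSet]
    rw [Set.mem_iUnion]
    exact ⟨t, Set.mem_iUnion.mpr ⟨ht, hD⟩⟩

end Ring


/-- For `c ≥ 17` and `q ≥ 3`, the leaf communities of any HCS decomposition of the ring
of cliques `R(q,c)` are precisely the `q` cliques of size `c`. -/
theorem ringOfCliques_hcs_leaves (q c : ℕ) (hq : 3 ≤ q) (hc : 17 ≤ c)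
    (T : HTree (Finset.univ : Finset (Fin q × Fin c)))
    (hT : IsHCS (ringOfCliques q c) T) :
    T.leavesSet = Set.range (clique q c) := by
  have hqpos : 0 < q := by omega
  have hcpos : 0 < c := by omega
  haveI : Nonempty (Fin q × Fin c) := ⟨(⟨0, hqpos⟩, ⟨0, hcpos⟩)⟩
  have hUC : IsUC (Finset.univ : Finset (Fin q × Fin c)) :=
    fun x _ => Finset.subset_univ _
  have hne : (Finset.univ : Finset (Fin q × Fin c)).Nonempty := Finset.univ_nonempty
  have hsub := leaves_sub hc T hT hUC hne
  apply Set.Subset.antisymm hsub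
  rintro D ⟨i, rfl⟩
  have hx : (⟨i, ⟨0, hcpos⟩⟩ : Fin q × Fin c) ∈ (Finset.univ : Finset (Fin q × Fin c)) :=
    Finset.mem_univ _
  obtain ⟨D', hD', hxD'⟩ := leaves_cover T _ hx
  obtain ⟨j, rfl⟩ := hsub hD'
  have : i = j := mem_clique.mp hxD'
  rw [← this] at hD'
  exact hD'

end HCSPaper
end
end

section
/- Let G be a finite simple graph on n ≥ 1 vertices with m ≥ 1 edges and maximum degree d, let p ≥ 2, and let G' be the rooted product of G with the complete graph K_p, which has m' = m + n·p(p−1)/2 edges. Then the partition P of the vertices of G' into the n clique copies satisfies Q(P) ≥ 1 − m/m' − n·p²·(d+p)²/(4·m'²). -/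
open Finset
open scoped Classical

noncomputable section

namespace HCSPaper

variable {V : Type*} [Fintype V] [DecidableEq V]

/-- The rooted product of `G` with the complete graph `K_p`: for each vertex `i` of `G`
the copy `{i} × Fin p` is a clique, and `(i,0)` is adjacent to `(j,0)` iff `ij` is an
edge of `G` (i.e. disjoint copies of `K_p` whose roots are identified with the vertices
of `G`). -/
def rootedProduct {W : Type*} (G : SimpleGraph W) (p : ℕ) : SimpleGraph (W × Fin p) :=
  SimpleGraph.fromRel fun x y =>
    (x.1 = y.1 ∧ x.2 ≠ y.2) ∨ (x.2.val = 0 ∧ y.2.val = 0 ∧ G.Adj x.1 y.1)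

set_option linter.unusedSectionVars false

lemma deg_eq (G : SimpleGraph V) (v : V) : deg G v = G.degree v := by
  simp [deg, SimpleGraph.degree, SimpleGraph.neighborFinset, Set.ncard_eq_toFinset_card']

lemma edgeCount_eq (G : SimpleGraph V) : edgeCount G = G.edgeFinset.card := by
  simp [edgeCount, SimpleGraph.edgeFinset, Set.ncard_eq_toFinset_card']

lemma rootedProduct_adj (G : SimpleGraph V) (p : ℕ) (x y : V × Fin p) :
    (rootedProduct G p).Adj x y ↔
      (x.1 = y.1 ∧ x.2 ≠ y.2) ∨ (x.2.val = 0 ∧ y.2.val = 0 ∧ G.Adj x.1 y.1) := by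
  unfold rootedProduct
  rw [SimpleGraph.fromRel_adj]
  constructor
  · rintro ⟨hne, h | h⟩
    · exact h
    · rcases h with ⟨h1, h2⟩ | ⟨h1, h2, h3⟩
      · exact Or.inl ⟨h1.symm, h2.symm⟩
      · exact Or.inr ⟨h2, h1, h3.symm⟩
  · rintro (⟨h1, h2⟩ | ⟨h1, h2, h3⟩)
    · exact ⟨fun h => h2 (congrArg Prod.snd h), Or.inl (Or.inl ⟨h1, h2⟩)⟩
    · refine ⟨fun h => G.loopless.irrefl y.1 ?_, Or.inl (Or.inr ⟨h1, h2, h3⟩)⟩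
      exact h ▸ h3

lemma rootedProduct_neighborFinset (G : SimpleGraph V) (p : ℕ) (i : V) (k : Fin p) :
    (rootedProduct G p).neighborFinset (i, k) =
      ({i} ×ˢ (Finset.univ.erase k)) ∪
        (if k.val = 0 then G.neighborFinset i ×ˢ {k} else ∅) := by
  ext ⟨j, l⟩
  by_cases hk : k.val = 0
  · rw [if_pos hk]
    simp only [SimpleGraph.mem_neighborFinset, rootedProduct_adj,
      Finset.mem_union, Finset.mem_product, Finset.mem_singleton, Finset.mem_erase,
      Finset.mem_univ, and_true, SimpleGraph.mem_neighborFinset]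
    constructor
    · rintro (⟨h1, h2⟩ | ⟨h1, h2, h3⟩)
      · exact Or.inl ⟨h1.symm, fun h => h2 h.symm⟩
      · exact Or.inr ⟨h3, Fin.ext (h2.trans hk.symm)⟩
    · rintro (⟨h1, h2⟩ | ⟨h1, h2⟩)
      · exact Or.inl ⟨h1.symm, fun h => h2 h.symm⟩
      · exact Or.inr ⟨hk, h2 ▸ hk, h1⟩
  · rw [if_neg hk]
    simp only [SimpleGraph.mem_neighborFinset, rootedProduct_adj,
      Finset.union_empty, Finset.mem_product, Finset.mem_singleton, Finset.mem_erase,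
      Finset.mem_univ, and_true]
    constructor
    · rintro (⟨h1, h2⟩ | ⟨h1, h2, h3⟩)
      · exact ⟨h1.symm, fun h => h2 h.symm⟩
      · exact absurd h1 hk
    · rintro ⟨h1, h2⟩
      exact Or.inl ⟨h1.symm, fun h => h2 h.symm⟩

lemma rootedProduct_degree (G : SimpleGraph V) (p : ℕ) (i : V) (k : Fin p) :
    (rootedProduct G p).degree (i, k) = (p - 1) + (if k.val = 0 then deg G i else 0) := by
  rw [SimpleGraph.degree, rootedProduct_neighborFinset]
  rw [Finset.card_union_of_disjoint]
  · congr 1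
    · rw [Finset.card_product, Finset.card_singleton, Finset.card_erase_of_mem (Finset.mem_univ k)]
      simp
    · split_ifs with h
      · rw [Finset.card_product, Finset.card_singleton, mul_one, deg_eq]; rfl
      · simp
  · split
    · refine Finset.disjoint_left.2 ?_
      rintro ⟨j, l⟩ h1 h2
      simp only [Finset.mem_product, Finset.mem_singleton, Finset.mem_erase] at h1 h2
      exact h1.2.1 h2.2
    · simp

lemma sum_fin_ite {M : Type*} [AddCommMonoid M] {p : ℕ} (hp : 0 < p) (c : M) :
    ∑ k : Fin p, (if k.val = 0 then c else 0) = c := by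
  have h : ∀ k : Fin p, (k.val = 0) = (k = ⟨0, hp⟩) :=
    fun k => propext ⟨fun h => Fin.ext h, fun h => by rw [h]⟩
  simp_rw [h]
  simp [Finset.sum_ite_eq']

lemma twice_edgeCount (G : SimpleGraph V) (p : ℕ) (hp : 0 < p) :
    2 * edgeCount (rootedProduct G p) =
      2 * edgeCount G + Fintype.card V * (p * (p - 1)) := by
  rw [edgeCount_eq, ← SimpleGraph.sum_degrees_eq_twice_card_edges,
    edgeCount_eq, ← SimpleGraph.sum_degrees_eq_twice_card_edges G,
    Fintype.sum_prod_type]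
  have h1 : ∀ i : V, ∑ k : Fin p, (rootedProduct G p).degree (i, k)
      = p * (p - 1) + G.degree i := by
    intro i
    have : ∀ k : Fin p, (rootedProduct G p).degree (i, k)
        = (p - 1) + (if k.val = 0 then deg G i else 0) := fun k => rootedProduct_degree G p i k
    rw [Finset.sum_congr rfl fun k _ => this k, Finset.sum_add_distrib, Finset.sum_const,
      sum_fin_ite hp, Finset.card_univ, Fintype.card_fin, smul_eq_mul, deg_eq]
  rw [Finset.sum_congr rfl fun i _ => h1 i, Finset.sum_add_distrib, Finset.sum_const,
    Finset.card_univ, smul_eq_mul]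
  ring


/-- Let `G` be a graph on `n ≥ 1` vertices with `m ≥ 1` edges and maximum degree `d`,
`p ≥ 2`, and `G'` the rooted product of `G` with `K_p`, which has
`m' = m + n·p(p−1)/2` edges.  Then the partition `P` of the vertices of `G'` into the
`n` clique copies satisfies `Q(P) ≥ 1 − m/m' − n·p²·(d+p)²/(4·m'²)`. -/
theorem rootedProduct_clique_partition_modularity (G : SimpleGraph V)
    (hV : 1 ≤ Fintype.card V) (hm : 1 ≤ edgeCount G)
    (p : ℕ) (hp : 2 ≤ p) (d : ℕ) (hd : ∀ v, deg G v ≤ d)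
    (m' : ℝ)
    (hm' : m' = (edgeCount G : ℝ) + (Fintype.card V : ℝ) * p * ((p : ℝ) - 1) / 2)
    (P : Finpartition (Finset.univ : Finset (V × Fin p)))
    (hP : P.parts = Finset.univ.image fun i : V =>
      Finset.univ.filter fun x : V × Fin p => x.1 = i) :
    (edgeCount (rootedProduct G p) : ℝ) = m' ∧
      1 - (edgeCount G : ℝ) / m' -
          (Fintype.card V : ℝ) * (p : ℝ) ^ 2 * ((d : ℝ) + (p : ℝ)) ^ 2 / (4 * m' ^ 2) ≤
        Qmod (rootedProduct G p) P := by
  have hp0 : 0 < p := by omega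
  have hp1R : (1:ℝ) ≤ (p:ℝ) := by exact_mod_cast hp0
  have hmR : (1:ℝ) ≤ (edgeCount G : ℝ) := by exact_mod_cast hm
  have hcR : 2 * (edgeCount (rootedProduct G p) : ℝ)
      = 2 * (edgeCount G : ℝ) + (Fintype.card V : ℝ) * ((p:ℝ) * ((p:ℝ) - 1)) := by
    have h := congrArg (fun x : ℕ => (x : ℝ)) (twice_edgeCount G p hp0)
    push_cast [Nat.cast_sub (by omega : 1 ≤ p)] at h
    linarith [h]
  have hE : (edgeCount (rootedProduct G p) : ℝ) = m' := by rw [hm']; linarith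
  have hm'pos : (0:ℝ) < m' := by
    rw [hm']
    have hn0 : (0:ℝ) ≤ (Fintype.card V : ℝ) * (p:ℝ) * ((p:ℝ) - 1) :=
      mul_nonneg (mul_nonneg (Nat.cast_nonneg _) (Nat.cast_nonneg _)) (by linarith)
    linarith
  refine ⟨hE, ?_⟩
  have hind : ∀ u v : V × Fin p, (∃ t ∈ P.parts, u ∈ t ∧ v ∈ t) ↔ u.1 = v.1 := by
    intro u v
    rw [hP]
    constructor
    · rintro ⟨t, ht, hu, hv⟩
      simp only [Finset.mem_image, Finset.mem_univ, true_and] at ht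
      obtain ⟨i, rfl⟩ := ht
      simp only [Finset.mem_filter, Finset.mem_univ, true_and] at hu hv
      exact hu.trans hv.symm
    · intro h
      refine ⟨Finset.univ.filter fun x : V × Fin p => x.1 = u.1, ?_, ?_, ?_⟩
      · exact Finset.mem_image.2 ⟨u.1, Finset.mem_univ _, rfl⟩
      · simp
      · simp [h]
  have hdeg' : ∀ (i : V) (k : Fin p), (deg (rootedProduct G p) (i,k) : ℝ)
      = ((p:ℝ) - 1) + (if k.val = 0 then (deg G i : ℝ) else 0) := by
    intro i k
    rw [deg_eq, rootedProduct_degree]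
    push_cast [Nat.cast_sub (by omega : 1 ≤ p), apply_ite (Nat.cast : ℕ → ℝ)]
    rfl
  have hdsum : ∀ i : V, ∑ k : Fin p, (deg (rootedProduct G p) (i,k) : ℝ)
      = (p:ℝ) * ((p:ℝ) - 1) + (deg G i : ℝ) := by
    intro i
    rw [Finset.sum_congr rfl fun k _ => hdeg' i k, Finset.sum_add_distrib,
      Finset.sum_const, sum_fin_ite hp0, Finset.card_univ, Fintype.card_fin, nsmul_eq_mul]
  have hsum : (∑ u : V × Fin p, ∑ v : V × Fin p,
      ((if (rootedProduct G p).Adj u v then (1:ℝ) else 0) -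
        (deg (rootedProduct G p) u : ℝ) * (deg (rootedProduct G p) v : ℝ) / (2 * m')) *
      (if u.1 = v.1 then (1:ℝ) else 0))
      = ∑ i : V, (((p:ℝ)^2 - (p:ℝ)) - ((p:ℝ) * ((p:ℝ)-1) + (deg G i : ℝ))^2 / (2*m')) := by
    rw [Fintype.sum_prod_type]
    refine Finset.sum_congr rfl fun i _ => ?_
    have collapse : ∀ k : Fin p, (∑ v : V × Fin p,
        ((if (rootedProduct G p).Adj (i,k) v then (1:ℝ) else 0) -
          (deg (rootedProduct G p) (i,k) : ℝ) * (deg (rootedProduct G p) v : ℝ) / (2 * m')) *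
        (if (i,k).1 = v.1 then (1:ℝ) else 0))
        = ∑ l : Fin p, ((if (rootedProduct G p).Adj (i,k) (i,l) then (1:ℝ) else 0) -
            (deg (rootedProduct G p) (i,k) : ℝ) * (deg (rootedProduct G p) (i,l) : ℝ) / (2 * m')) := by
      intro k
      rw [Fintype.sum_prod_type]
      simp only [mul_ite, mul_one, mul_zero]
      have h1 : ∀ j : V, (∑ l : Fin p,
          if (i,k).1 = j then ((if (rootedProduct G p).Adj (i,k) (j,l) then (1:ℝ) else 0) -
            (deg (rootedProduct G p) (i,k) : ℝ) * (deg (rootedProduct G p) (j,l) : ℝ) / (2 * m')) else 0)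
          = if i = j then (∑ l : Fin p, ((if (rootedProduct G p).Adj (i,k) (j,l) then (1:ℝ) else 0) -
            (deg (rootedProduct G p) (i,k) : ℝ) * (deg (rootedProduct G p) (j,l) : ℝ) / (2 * m'))) else 0 := by
        intro j
        by_cases h : i = j <;> simp [h]
      rw [Finset.sum_congr rfl fun j _ => h1 j, Finset.sum_ite_eq, if_pos (Finset.mem_univ i)]
    rw [Finset.sum_congr rfl fun k _ => collapse k]
    have hAdj : ∀ k l : Fin p, (rootedProduct G p).Adj (i,k) (i,l) ↔ ¬(k = l) := by
      intro k l
      rw [rootedProduct_adj]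
      simp [G.loopless.irrefl i]
    have hA : (∑ k : Fin p, ∑ l : Fin p,
        if (rootedProduct G p).Adj (i,k) (i,l) then (1:ℝ) else 0) = (p:ℝ)^2 - (p:ℝ) := by
      simp_rw [hAdj]
      have hrow : ∀ k : Fin p, (∑ l : Fin p, if ¬ k = l then (1:ℝ) else 0) = (p:ℝ) - 1 := by
        intro k
        have e : ∀ l : Fin p, (if ¬ k = l then (1:ℝ) else 0)
            = 1 - (if k = l then (1:ℝ) else 0) := by
          intro l; by_cases h : k = l <;> simp [h]
        rw [Finset.sum_congr rfl fun l _ => e l, Finset.sum_sub_distrib, Finset.sum_const,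
          Finset.sum_ite_eq, if_pos (Finset.mem_univ k), Finset.card_univ, Fintype.card_fin,
          nsmul_eq_mul, mul_one]
      rw [Finset.sum_congr rfl fun k _ => hrow k, Finset.sum_const, Finset.card_univ,
        Fintype.card_fin, nsmul_eq_mul]
      ring
    have hB : (∑ k : Fin p, ∑ l : Fin p,
        (deg (rootedProduct G p) (i,k) : ℝ) * (deg (rootedProduct G p) (i,l) : ℝ) / (2*m'))
        = ((p:ℝ) * ((p:ℝ)-1) + (deg G i : ℝ))^2 / (2*m') := by
      simp_rw [← Finset.sum_div]
      rw [sq, ← hdsum i, Finset.sum_mul_sum]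
    calc (∑ k : Fin p, ∑ l : Fin p,
          ((if (rootedProduct G p).Adj (i,k) (i,l) then (1:ℝ) else 0) -
            (deg (rootedProduct G p) (i,k) : ℝ) * (deg (rootedProduct G p) (i,l) : ℝ) / (2 * m')))
        = (∑ k : Fin p, ∑ l : Fin p,
            if (rootedProduct G p).Adj (i,k) (i,l) then (1:ℝ) else 0)
          - ∑ k : Fin p, ∑ l : Fin p,
              (deg (rootedProduct G p) (i,k) : ℝ) * (deg (rootedProduct G p) (i,l) : ℝ) / (2*m') := by
          rw [← Finset.sum_sub_distrib]
          exact Finset.sum_congr rfl fun k _ => by rw [← Finset.sum_sub_distrib]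
      _ = ((p:ℝ)^2 - (p:ℝ)) - ((p:ℝ) * ((p:ℝ)-1) + (deg G i : ℝ))^2 / (2*m') := by
          rw [hA, hB]
  simp only [Qmod, hE]
  simp_rw [hind]
  rw [hsum, Finset.sum_sub_distrib, Finset.sum_const, Finset.card_univ, nsmul_eq_mul,
    ← Finset.sum_div]
  set S := ∑ i : V, ((p:ℝ) * ((p:ℝ)-1) + (deg G i : ℝ))^2 with hSdef
  have hS : S ≤ (Fintype.card V : ℝ) * ((p:ℝ)^2 * ((d:ℝ)+(p:ℝ))^2) := by
    have hterm : ∀ i : V, ((p:ℝ)*((p:ℝ)-1) + (deg G i : ℝ))^2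
        ≤ (p:ℝ)^2*((d:ℝ)+(p:ℝ))^2 := by
      intro i
      have hdi : (deg G i : ℝ) ≤ d := by exact_mod_cast hd i
      have hdi0 : (0:ℝ) ≤ (deg G i : ℝ) := Nat.cast_nonneg _
      have hd0 : (0:ℝ) ≤ (d:ℝ) := Nat.cast_nonneg _
      have hx0 : (0:ℝ) ≤ (p:ℝ)*((p:ℝ)-1) + (deg G i : ℝ) := by nlinarith
      have hxb : (p:ℝ)*((p:ℝ)-1) + (deg G i : ℝ) ≤ (p:ℝ)*((d:ℝ)+(p:ℝ)) := by nlinarith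
      calc ((p:ℝ)*((p:ℝ)-1) + (deg G i : ℝ))^2 ≤ ((p:ℝ)*((d:ℝ)+(p:ℝ)))^2 :=
            pow_le_pow_left₀ hx0 hxb 2
        _ = (p:ℝ)^2*((d:ℝ)+(p:ℝ))^2 := by ring
    calc S ≤ ∑ _i : V, (p:ℝ)^2*((d:ℝ)+(p:ℝ))^2 := Finset.sum_le_sum fun i _ => hterm i
      _ = (Fintype.card V : ℝ) * ((p:ℝ)^2*((d:ℝ)+(p:ℝ))^2) := by
          rw [Finset.sum_const, Finset.card_univ, nsmul_eq_mul]
  have hQ : (1/(2*m')) * ((Fintype.card V : ℝ)*((p:ℝ)^2-(p:ℝ)) - S/(2*m'))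
      = 1 - (edgeCount G : ℝ)/m' - S/(4*m'^2) := by
    have hid : (Fintype.card V : ℝ)*((p:ℝ)^2-(p:ℝ)) = 2*m' - 2*(edgeCount G : ℝ) := by
      rw [hm']; ring
    rw [hid]
    field_simp
    ring
  rw [hQ]
  have h4 : (0:ℝ) < 4*m'^2 := by positivity
  have h1 : S/(4*m'^2) ≤ (Fintype.card V : ℝ)*(p:ℝ)^2*((d:ℝ)+(p:ℝ))^2/(4*m'^2) := by
    have hS' : S ≤ (Fintype.card V : ℝ)*(p:ℝ)^2*((d:ℝ)+(p:ℝ))^2 := by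
      calc S ≤ (Fintype.card V : ℝ) * ((p:ℝ)^2 * ((d:ℝ)+(p:ℝ))^2) := hS
        _ = (Fintype.card V : ℝ)*(p:ℝ)^2*((d:ℝ)+(p:ℝ))^2 := by ring
    gcongr
  linarith

end HCSPaper
end
end

section
/- Let (G_n) be a sequence of finite simple graphs where G_n has n vertices, m_n = Θ(n) edges, and maximum degree d_n = O(√n); let (p_n) satisfy p_n → ∞ and p_n = o(n); and let G'_n be the rooted product of G_n with the complete graph K_{p_n}. Then the modularity of G'_n tends to 1, i.e., Q(G'_n) = 1 − o(1) as n → ∞. -/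
open Finset
open scoped Classical

noncomputable section

namespace HCSPaper

set_option linter.unusedSectionVars false

variable {V : Type*} [Fintype V] [DecidableEq V]

/-- The modularity `Q(G)` of `G`: the maximum of `Q(P)` over all partitions of the
vertex set. -/
def Qmax (G : SimpleGraph V) : ℝ :=
  sSup (Set.range fun P : Finpartition (Finset.univ : Finset V) => Qmod G P)

lemma sum_deg (G : SimpleGraph V) : ∑ v : V, deg G v = 2 * edgeCount G := by
  simp_rw [deg_eq, edgeCount_eq]
  exact SimpleGraph.sum_degrees_eq_twice_card_edges G

lemma sum_adj_indicator (G : SimpleGraph V) (u : V) :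
    ∑ v : V, (if G.Adj u v then (1 : ℝ) else 0) = (deg G u : ℝ) := by
  rw [Finset.sum_ite, Finset.sum_const_zero, add_zero, Finset.sum_const, deg_eq,
    nsmul_eq_mul, mul_one, SimpleGraph.degree, SimpleGraph.neighborFinset_eq_filter]

lemma Qmod_le_one (G : SimpleGraph V) (P : Finpartition (Finset.univ : Finset V)) :
    Qmod G P ≤ 1 := by
  rcases Nat.eq_zero_or_pos (edgeCount G) with h | h
  · simp [Qmod, h]
  have hS : (0:ℝ) < 2 * (edgeCount G : ℝ) := by positivity
  have key : ∑ u : V, ∑ v : V,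
      ((if G.Adj u v then (1 : ℝ) else 0) -
          (deg G u : ℝ) * (deg G v : ℝ) / (2 * (edgeCount G : ℝ))) *
        (if ∃ t ∈ P.parts, u ∈ t ∧ v ∈ t then (1 : ℝ) else 0)
      ≤ 2 * (edgeCount G : ℝ) := by
    calc ∑ u : V, ∑ v : V, _ ≤ ∑ u : V, ∑ v : V, (if G.Adj u v then (1:ℝ) else 0) := by
          apply Finset.sum_le_sum; intro u _
          apply Finset.sum_le_sum; intro v _
          by_cases hδ : ∃ t ∈ P.parts, u ∈ t ∧ v ∈ t
          · simp only [hδ, if_true, mul_one]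
            have : (0:ℝ) ≤ (deg G u : ℝ) * (deg G v : ℝ) / (2 * (edgeCount G : ℝ)) := by
              positivity
            linarith
          · simp only [hδ, if_false, mul_zero]
            positivity
      _ = ∑ u : V, (deg G u : ℝ) := by
          exact Finset.sum_congr rfl fun u _ => sum_adj_indicator G u
      _ = 2 * (edgeCount G : ℝ) := by
          rw [← Nat.cast_sum, sum_deg]; push_cast; ring
  rw [Qmod]
  rw [div_mul_eq_mul_div, one_mul, div_le_one hS]
  exact key

lemma Qmax_le_one (G : SimpleGraph V) : Qmax G ≤ 1 := by
  apply Real.sSup_le _ one_pos.le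
  rintro x ⟨P, rfl⟩
  exact Qmod_le_one G P

lemma le_Qmax (G : SimpleGraph V) (P : Finpartition (Finset.univ : Finset V)) :
    Qmod G P ≤ Qmax G :=
  le_csSup ⟨1, by rintro x ⟨Q, rfl⟩; exact Qmod_le_one G Q⟩ ⟨P, rfl⟩
lemma rp_adj {W : Type*} (G : SimpleGraph W) (p : ℕ) (x y : W × Fin p) :
    (rootedProduct G p).Adj x y ↔
      (x.1 = y.1 ∧ x.2 ≠ y.2) ∨ (x.2.val = 0 ∧ y.2.val = 0 ∧ G.Adj x.1 y.1) := by
  rw [rootedProduct, SimpleGraph.fromRel_adj]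
  constructor
  · rintro ⟨hne, h | h⟩
    · exact h
    · rcases h with ⟨h1, h2⟩ | ⟨h1, h2, h3⟩
      · exact Or.inl ⟨h1.symm, h2.symm⟩
      · exact Or.inr ⟨h2, h1, h3.symm⟩
  · intro h
    refine ⟨?_, Or.inl h⟩
    rcases h with ⟨h1, h2⟩ | ⟨h1, h2, h3⟩
    · exact fun he => h2 (by rw [he])
    · exact fun he => G.ne_of_adj h3 (by rw [he])

lemma ncard_A {W : Type*} [Fintype W] (p : ℕ) (x : W × Fin p) :
    ((fun k => (x.1, k)) '' ({x.2}ᶜ : Set (Fin p))).ncard = p - 1 := by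
  rw [Set.ncard_image_of_injective _ (fun a b h => by simpa using h),
    Set.ncard_eq_toFinset_card']
  simp [Finset.card_compl]

lemma deg_rp_le {W : Type*} [Fintype W] (G : SimpleGraph W) (p : ℕ) (x : W × Fin p) :
    deg (rootedProduct G p) x ≤ (p - 1) + deg G x.1 := by
  classical
  rw [deg]
  set A : Set (W × Fin p) := (fun k => (x.1, k)) '' ({x.2}ᶜ : Set (Fin p)) with hA
  set B : Set (W × Fin p) := {y | G.Adj x.1 y.1 ∧ y.2.val = 0} with hB
  have hsub : (rootedProduct G p).neighborSet x ⊆ A ∪ B := by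
    intro y hy
    rw [SimpleGraph.mem_neighborSet, rp_adj] at hy
    rcases hy with ⟨h1, h2⟩ | ⟨h1, h2, h3⟩
    · exact Or.inl ⟨y.2, by simpa using (Ne.symm h2), Prod.ext h1 rfl⟩
    · exact Or.inr ⟨h3, h2⟩
  have hAcard : A.ncard = p - 1 := ncard_A p x
  have hBcard : B.ncard ≤ deg G x.1 := by
    rw [deg]
    refine Set.ncard_le_ncard_of_injOn Prod.fst (fun y hy => hy.1) ?_ (Set.toFinite _)
    intro y hy z hz hfst
    have h2 : y.2 = z.2 := Fin.ext (by rw [hy.2, hz.2])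
    exact Prod.ext hfst h2
  calc ((rootedProduct G p).neighborSet x).ncard ≤ (A ∪ B).ncard :=
        Set.ncard_le_ncard hsub (Set.toFinite _)
    _ ≤ A.ncard + B.ncard := Set.ncard_union_le A B
    _ ≤ (p - 1) + deg G x.1 := by rw [hAcard]; exact Nat.add_le_add_left hBcard _

lemma deg_rp_ge {W : Type*} [Fintype W] (G : SimpleGraph W) (p : ℕ) (x : W × Fin p) :
    p - 1 ≤ deg (rootedProduct G p) x := by
  rw [deg]
  have hsub : ((fun k => (x.1, k)) '' ({x.2}ᶜ : Set (Fin p))) ⊆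
      (rootedProduct G p).neighborSet x := by
    rintro y ⟨k, hk, rfl⟩
    rw [SimpleGraph.mem_neighborSet, rp_adj]
    exact Or.inl ⟨rfl, fun h => hk (by simpa using h.symm)⟩
  have := Set.ncard_le_ncard hsub (Set.toFinite _)
  rwa [ncard_A] at this
def cliquePart (W : Type*) [Fintype W] [DecidableEq W] (p : ℕ) :
    Finpartition (Finset.univ : Finset (W × Fin p)) :=
  Finpartition.ofSetoid (Setoid.ker Prod.fst)

lemma cliquePart_delta {W : Type*} [Fintype W] [DecidableEq W] (p : ℕ) (u v : W × Fin p) :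
    (∃ t ∈ (cliquePart W p).parts, u ∈ t ∧ v ∈ t) ↔ u.1 = v.1 := by
  constructor
  · rintro ⟨t, ht, hu, hv⟩
    have heq := Finpartition.part_eq_of_mem _ ht hu
    have hv' : v ∈ (cliquePart W p).part u := heq ▸ hv
    exact Finpartition.mem_part_ofSetoid_iff_rel.mp hv'
  · intro h
    exact ⟨(cliquePart W p).part u, (Finpartition.part_mem _).mpr (Finset.mem_univ u),
      Finpartition.mem_part _ (Finset.mem_univ u),
      Finpartition.mem_part_ofSetoid_iff_rel.mpr h⟩

lemma ite_and_one (a b : Prop) :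
    (if a ∧ b then (1:ℝ) else 0) = (if a then (1:ℝ) else 0) * (if b then (1:ℝ) else 0) := by
  by_cases ha : a <;> by_cases hb : b <;> simp [ha, hb]

lemma sum_fin_val_zero {p : ℕ} (hp : 1 ≤ p) :
    ∑ k : Fin p, (if (k : ℕ) = 0 then (1:ℝ) else 0) = 1 := by
  have h : ∀ k : Fin p, ((k : ℕ) = 0) ↔ k = ⟨0, hp⟩ := fun k => by
    rw [Fin.ext_iff]
  simp_rw [h]
  simp

lemma sum_ind_eq_fst {W : Type*} [Fintype W] [DecidableEq W] (p : ℕ) :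
    ∑ u : W × Fin p, ∑ v : W × Fin p, (if u.1 = v.1 then (1:ℝ) else 0)
      = (Fintype.card W : ℝ) * p ^ 2 := by
  rw [Fintype.sum_prod_type]
  simp [Fintype.sum_prod_type, apply_ite Finset.card, Finset.sum_ite_eq]
  have hc : ∀ x : W, (Finset.filter (fun v : W × Fin p => x = v.1) Finset.univ).card = p := by
    intro x
    have he : Finset.filter (fun v : W × Fin p => x = v.1) Finset.univ
        = Finset.image (fun k => (x, k)) Finset.univ := by
      ext ⟨a, b⟩
      simp [eq_comm, Prod.ext_iff]
    rw [he, Finset.card_image_of_injective _ (fun a b h => by simpa using h)]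
    simp
  simp [hc]
  left; ring

lemma cross_adj_iff {W : Type*} (G : SimpleGraph W) (p : ℕ) (u v : W × Fin p) :
    ((rootedProduct G p).Adj u v ∧ u.1 ≠ v.1) ↔
      ((u.2 : ℕ) = 0 ∧ (v.2 : ℕ) = 0 ∧ G.Adj u.1 v.1) := by
  rw [rp_adj]
  constructor
  · rintro ⟨h | h, hne⟩
    · exact absurd h.1 hne
    · exact h
  · intro h
    exact ⟨Or.inr h, G.ne_of_adj h.2.2⟩

lemma sum_cross {W : Type*} [Fintype W] [DecidableEq W] (G : SimpleGraph W) {p : ℕ}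
    (hp : 1 ≤ p) :
    ∑ u : W × Fin p, ∑ v : W × Fin p,
        (if (rootedProduct G p).Adj u v ∧ u.1 ≠ v.1 then (1:ℝ) else 0)
      = 2 * (edgeCount G : ℝ) := by
  have h : ∀ u v : W × Fin p,
      (if (rootedProduct G p).Adj u v ∧ u.1 ≠ v.1 then (1:ℝ) else 0)
        = (if (u.2 : ℕ) = 0 then (1:ℝ) else 0) *
            ((if (v.2 : ℕ) = 0 then (1:ℝ) else 0) * (if G.Adj u.1 v.1 then (1:ℝ) else 0)) := by
    intro u v
    rw [if_congr (cross_adj_iff G p u v) rfl rfl]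
    by_cases h1 : (u.2 : ℕ) = 0 <;> by_cases h2 : (v.2 : ℕ) = 0 <;>
      by_cases h3 : G.Adj u.1 v.1 <;> simp [h1, h2, h3]
  simp only [h]
  rw [Fintype.sum_prod_type]
  simp only [Fintype.sum_prod_type]
  have hl : ∀ Q : Prop, ∑ l : Fin p,
      (if (l : ℕ) = 0 then (1:ℝ) else 0) * (if Q then (1:ℝ) else 0)
        = (if Q then (1:ℝ) else 0) := by
    intro Q
    rw [← Finset.sum_mul, sum_fin_val_zero hp, one_mul]
  have hk : ∀ c : ℝ, ∑ k : Fin p, (if (k : ℕ) = 0 then (1:ℝ) else 0) * c = c := by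
    intro c
    rw [← Finset.sum_mul, sum_fin_val_zero hp, one_mul]
  simp only [← Finset.mul_sum, hl, hk]
  simp only [sum_adj_indicator]
  rw [← Nat.cast_sum, sum_deg]
  push_cast
  ring
lemma sum_adj_ind {W : Type*} [Fintype W] [DecidableEq W] (G : SimpleGraph W) {p : ℕ}
    (hp : 1 ≤ p) :
    ∑ u : W × Fin p, ∑ v : W × Fin p,
        (if (rootedProduct G p).Adj u v then (1:ℝ) else 0) * (if u.1 = v.1 then (1:ℝ) else 0)
      = 2 * (edgeCount (rootedProduct G p) : ℝ) - 2 * (edgeCount G : ℝ) := by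
  have key : ∀ u v : W × Fin p,
      (if (rootedProduct G p).Adj u v then (1:ℝ) else 0) * (if u.1 = v.1 then (1:ℝ) else 0)
        = (if (rootedProduct G p).Adj u v then (1:ℝ) else 0)
          - (if (rootedProduct G p).Adj u v ∧ u.1 ≠ v.1 then (1:ℝ) else 0) := by
    intro u v
    by_cases h1 : (rootedProduct G p).Adj u v <;> by_cases h2 : u.1 = v.1 <;>
      simp [h1, h2]
  simp only [key, Finset.sum_sub_distrib]
  rw [sum_cross G hp]
  have hA : ∑ u : W × Fin p, ∑ v : W × Fin p,
      (if (rootedProduct G p).Adj u v then (1:ℝ) else 0)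
        = 2 * (edgeCount (rootedProduct G p) : ℝ) := by
    simp only [sum_adj_indicator]
    rw [← Nat.cast_sum, sum_deg]
    push_cast; ring
  rw [hA]

set_option maxHeartbeats 1000000 in
lemma main_lb {W : Type*} [Fintype W] [DecidableEq W] (G : SimpleGraph W) {p : ℕ}
    (hp : 2 ≤ p) (K a₂ : ℝ) (hK : 0 ≤ K)
    (hd : ∀ v, (deg G v : ℝ) ≤ K * Real.sqrt (Fintype.card W))
    (hm2 : (edgeCount G : ℝ) ≤ a₂ * (Fintype.card W))
    (hn : 1 ≤ Fintype.card W) :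
    1 - (4 * a₂ + 8 * K ^ 2) / (p : ℝ) ^ 2 - 8 / (Fintype.card W : ℝ)
      ≤ Qmax (rootedProduct G p) := by
  set n := Fintype.card W with hndef
  have hn1 : (1:ℝ) ≤ (n:ℝ) := by exact_mod_cast hn
  have hp1 : 1 ≤ p := le_trans (by norm_num) hp
  have hp2 : (2:ℝ) ≤ (p:ℝ) := by exact_mod_cast hp
  have hppos : (0:ℝ) < (p:ℝ) := by linarith
  have hnpos : (0:ℝ) < (n:ℝ) := by linarith
  set G' := rootedProduct G p with hG'
  set S : ℝ := 2 * (edgeCount G' : ℝ) with hSdef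
  set D : ℝ := (p:ℝ) + K * Real.sqrt n with hDdef
  have hDpos : 0 < D := by positivity
  have hSeq : S = ∑ u : W × Fin p, (deg G' u : ℝ) := by
    rw [hSdef, ← Nat.cast_sum, sum_deg]; push_cast; ring
  have hdegub : ∀ u : W × Fin p, (deg G' u : ℝ) ≤ D := by
    intro u
    have h1 : (deg G' u : ℝ) ≤ ((p - 1 + deg G u.1 : ℕ) : ℝ) :=
      Nat.cast_le.mpr (deg_rp_le G p u)
    have h2 : ((p - 1 + deg G u.1 : ℕ) : ℝ) = (p:ℝ) - 1 + (deg G u.1 : ℝ) := by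
      push_cast [Nat.cast_sub hp1]; ring
    have h3 := hd u.1
    rw [hDdef]; rw [h2] at h1; linarith
  have hdeglb : ∀ u : W × Fin p, (p:ℝ) - 1 ≤ (deg G' u : ℝ) := by
    intro u
    have h1 : ((p - 1 : ℕ) : ℝ) ≤ (deg G' u : ℝ) := Nat.cast_le.mpr (deg_rp_ge G p u)
    rwa [Nat.cast_sub hp1, Nat.cast_one] at h1
  have hSlb : (n:ℝ) * p * ((p:ℝ) - 1) ≤ S := by
    rw [hSeq]
    have h1 : ∑ _u : W × Fin p, ((p:ℝ) - 1) ≤ ∑ u : W × Fin p, (deg G' u : ℝ) :=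
      Finset.sum_le_sum fun u _ => hdeglb u
    have h2 : ∑ _u : W × Fin p, ((p:ℝ) - 1) = (n:ℝ) * p * ((p:ℝ) - 1) := by
      rw [Finset.sum_const, Finset.card_univ, Fintype.card_prod, Fintype.card_fin,
        nsmul_eq_mul]
      push_cast; ring
    linarith
  have hS2 : (n:ℝ) * p ^ 2 / 2 ≤ S := by nlinarith
  have hSpos : (0:ℝ) < S := by nlinarith
  set P := cliquePart W p with hP
  set T₂ : ℝ := ∑ u : W × Fin p, ∑ v : W × Fin p,
      (deg G' u : ℝ) * (deg G' v : ℝ) * (if u.1 = v.1 then (1:ℝ) else 0) with hT₂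
  have hQ : Qmod G' P = 1 - 2 * (edgeCount G : ℝ) / S - T₂ / S ^ 2 := by
    rw [Qmod]
    have hδ : ∀ u v : W × Fin p,
        (if ∃ t ∈ P.parts, u ∈ t ∧ v ∈ t then (1:ℝ) else 0)
          = (if u.1 = v.1 then (1:ℝ) else 0) := fun u v =>
      if_congr (cliquePart_delta p u v) rfl rfl
    simp only [hδ, sub_mul, div_mul_eq_mul_div, Finset.sum_sub_distrib, ← Finset.sum_div]
    rw [sum_adj_ind G hp1, ← hSdef, ← hT₂]
    field_simp
  have hT₂ub : T₂ ≤ D ^ 2 * ((n:ℝ) * p ^ 2) := by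
    have h1 : T₂ ≤ ∑ u : W × Fin p, ∑ v : W × Fin p,
        D ^ 2 * (if u.1 = v.1 then (1:ℝ) else 0) := by
      rw [hT₂]
      apply Finset.sum_le_sum; intro u _
      apply Finset.sum_le_sum; intro v _
      by_cases h : u.1 = v.1
      · simp only [h, if_true, mul_one]
        have := hdegub u; have := hdegub v
        have h0u : (0:ℝ) ≤ (deg G' u : ℝ) := Nat.cast_nonneg _
        have h0v : (0:ℝ) ≤ (deg G' v : ℝ) := Nat.cast_nonneg _
        nlinarith
      · simp [h]
    have h2 : ∑ u : W × Fin p, ∑ v : W × Fin p,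
        D ^ 2 * (if u.1 = v.1 then (1:ℝ) else 0) = D ^ 2 * ((n:ℝ) * p ^ 2) := by
      simp only [← Finset.mul_sum]
      rw [sum_ind_eq_fst]
    linarith
  have hT₂0 : 0 ≤ T₂ := by
    rw [hT₂]
    apply Finset.sum_nonneg; intro u _
    apply Finset.sum_nonneg; intro v _
    positivity
  have hm0 : (0:ℝ) ≤ (edgeCount G : ℝ) := Nat.cast_nonneg _
  have ha₂ : 0 ≤ a₂ := by nlinarith
  -- bound the two error terms
  have e1 : 2 * (edgeCount G : ℝ) / S ≤ 4 * a₂ / (p:ℝ) ^ 2 := by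
    have h1 : 2 * (edgeCount G : ℝ) / S ≤ (2 * (a₂ * n)) / ((n:ℝ) * p ^ 2 / 2) :=
      div_le_div₀ (by positivity) (by linarith) (by positivity) hS2
    have h2 : (2 * (a₂ * n)) / ((n:ℝ) * p ^ 2 / 2) = 4 * a₂ / (p:ℝ) ^ 2 := by
      field_simp
      ring
    linarith
  have e2 : T₂ / S ^ 2 ≤ 8 / (n:ℝ) + 8 * K ^ 2 / (p:ℝ) ^ 2 := by
    have h1 : T₂ / S ^ 2 ≤ (D ^ 2 * ((n:ℝ) * p ^ 2)) / (((n:ℝ) * p ^ 2 / 2) ^ 2) :=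
      div_le_div₀ (by positivity) hT₂ub (by positivity)
        (pow_le_pow_left₀ (by positivity) hS2 2)
    have hsq : Real.sqrt (n:ℝ) ^ 2 = (n:ℝ) := Real.sq_sqrt (by positivity)
    have hD2 : D ^ 2 ≤ 2 * (p:ℝ) ^ 2 + 2 * K ^ 2 * n := by
      rw [hDdef]
      nlinarith [sq_nonneg ((p:ℝ) - K * Real.sqrt n), hsq]
    have h2 : (D ^ 2 * ((n:ℝ) * p ^ 2)) / (((n:ℝ) * p ^ 2 / 2) ^ 2)
        = 4 * D ^ 2 / ((n:ℝ) * p ^ 2) := by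
      field_simp
      ring
    have h3 : 4 * D ^ 2 / ((n:ℝ) * p ^ 2)
        ≤ (8 * (p:ℝ) ^ 2 + 8 * K ^ 2 * n) / ((n:ℝ) * p ^ 2) :=
      div_le_div_of_nonneg_right (by nlinarith) (by positivity)
    have h4 : (8 * (p:ℝ) ^ 2 + 8 * K ^ 2 * n) / ((n:ℝ) * p ^ 2)
        = 8 / (n:ℝ) + 8 * K ^ 2 / (p:ℝ) ^ 2 := by
      field_simp
    linarith
  have hfinal : 1 - (4 * a₂ + 8 * K ^ 2) / (p:ℝ) ^ 2 - 8 / (n:ℝ) ≤ Qmod G' P := by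
    rw [hQ]
    have : (4 * a₂ + 8 * K ^ 2) / (p:ℝ) ^ 2 = 4 * a₂ / (p:ℝ) ^ 2 + 8 * K ^ 2 / (p:ℝ) ^ 2 := by
      ring
    rw [this]
    linarith
  exact le_trans hfinal (le_Qmax G' P)

open Filter Asymptotics in
/-- Let `(G_n)` be graphs on `n` vertices with `m_n = Θ(n)` edges and maximum degree
`d_n = O(√n)`, let `p_n → ∞` with `p_n = o(n)`, and let `G'_n` be the rooted product of
`G_n` with `K_{p_n}`.  Then `Q(G'_n) = 1 − o(1)`, i.e. the modularity of `G'_n` tends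
to `1`. -/
theorem rootedProduct_modularity_tendsto_one (G : ∀ n : ℕ, SimpleGraph (Fin n))
    (a₁ a₂ : ℝ) (ha₁ : 0 < a₁) (ha₂ : 0 < a₂)
    (hm : ∀ᶠ n : ℕ in atTop,
      a₁ * (n : ℝ) ≤ (edgeCount (G n) : ℝ) ∧ (edgeCount (G n) : ℝ) ≤ a₂ * (n : ℝ))
    (K : ℝ)
    (hd : ∀ᶠ n : ℕ in atTop, ∀ v, (deg (G n) v : ℝ) ≤ K * Real.sqrt n)
    (p : ℕ → ℕ) (hp : Tendsto p atTop atTop)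
    (hpo : (fun n : ℕ => (p n : ℝ)) =o[atTop] fun n : ℕ => (n : ℝ)) :
    Tendsto (fun n : ℕ => Qmax (rootedProduct (G n) (p n))) atTop (nhds 1) := by
  set K' : ℝ := max K 0 with hK'def
  have hK' : 0 ≤ K' := le_max_right _ _
  set c : ℝ := 4 * a₂ + 8 * K' ^ 2 with hcdef
  have hlow : ∀ᶠ n : ℕ in atTop,
      1 - c / (p n : ℝ) ^ 2 - 8 / (n : ℝ)
        ≤ Qmax (rootedProduct (G n) (p n)) := by
    filter_upwards [hm, hd, hp.eventually_ge_atTop 2, eventually_ge_atTop 1]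
      with n hmn hdn hpn hn1
    have hcard : Fintype.card (Fin n) = n := Fintype.card_fin n
    have hd' : ∀ v, (deg (G n) v : ℝ) ≤ K' * Real.sqrt (Fintype.card (Fin n)) := by
      intro v
      rw [hcard]
      exact le_trans (hdn v)
        (mul_le_mul_of_nonneg_right (le_max_left _ _) (Real.sqrt_nonneg _))
    have hm2 : (edgeCount (G n) : ℝ) ≤ a₂ * (Fintype.card (Fin n)) := by
      rw [hcard]; exact hmn.2
    have := main_lb (G n) hpn K' a₂ hK' hd' hm2 (by rw [hcard]; exact hn1)
    rw [hcard] at this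
    rw [hcdef]
    exact this
  have hhigh : ∀ᶠ n : ℕ in atTop,
      Qmax (rootedProduct (G n) (p n)) ≤ 1 :=
    Eventually.of_forall fun n => Qmax_le_one _
  have hppow : Tendsto (fun n : ℕ => (p n : ℝ) ^ 2) atTop atTop := by
    have h1 : Tendsto (fun n : ℕ => (p n : ℝ)) atTop atTop :=
      tendsto_natCast_atTop_atTop.comp hp
    have := h1.atTop_mul_atTop₀ h1
    simpa [pow_two] using this
  have hA : Tendsto (fun n : ℕ => c / (p n : ℝ) ^ 2) atTop (nhds 0) :=
    tendsto_const_nhds.div_atTop hppow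
  have hB : Tendsto (fun n : ℕ => 8 / (n : ℝ)) atTop (nhds 0) :=
    tendsto_const_nhds.div_atTop tendsto_natCast_atTop_atTop
  have hflim : Tendsto (fun n : ℕ => 1 - c / (p n : ℝ) ^ 2 - 8 / (n : ℝ)) atTop (nhds 1) := by
    have := (tendsto_const_nhds (x := (1:ℝ)) (f := atTop)).sub hA |>.sub hB
    simpa using this
  exact tendsto_of_tendsto_of_tendsto_of_le_of_le' hflim tendsto_const_nhds hlow hhigh

end HCSPaper
end
end
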